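/- arXiv:1910.14363 — 4 statements merged into one kernel-verified Lean document; each statement's English description precedes it below -/
import Mathlib

section
/- Let (R,μ) be a Hopf-Galois algebra over a field k. Then (R,μ) arises from a Hopf algebra H via μ(x) = x_(1) ⊗ S(x_(2)) ⊗ x_(3) if and only if there exists an algebra map α : R → k. In that case, defining on the algebra R a coalgebra structure by Δ(x) = α(x_(2)) x_(1) ⊗ x_(3) with counit α, and S(x) = α(x_(1) x_(3)) x_(2), one obtains a Hopf algebra H whose associated Hopf-Galois algebra structure is the given μ. -/
open TensorProduct MulOpposite

set_option synthInstance.maxHeartbeats 1000000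
set_option maxHeartbeats 1000000

noncomputable section

universe u v w

section Maps

variable (k : Type u) [Field k] (R : Type v) [Ring R] [Algebra k R]

/-- `unop` as a `k`-linear map. -/
def unopL : Rᵐᵒᵖ →ₗ[k] R :=
  ((opLinearEquiv k : R ≃ₗ[k] Rᵐᵒᵖ)).symm.toLinearMap

/-- `op` as a `k`-linear map. -/
def opL : R →ₗ[k] Rᵐᵒᵖ :=
  (opLinearEquiv k : R ≃ₗ[k] Rᵐᵒᵖ).toLinearMap

/-- `Rᵐᵒᵖ ⊗ R → R`, `op x ⊗ y ↦ x * y`. -/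
def opMulL : Rᵐᵒᵖ ⊗[k] R →ₗ[k] R :=
  LinearMap.mul' k R ∘ₗ LinearMap.rTensor R (unopL k R)

/-- `R ⊗ Rᵐᵒᵖ → R`, `x ⊗ op y ↦ x * y`. -/
def mulOpL : R ⊗[k] Rᵐᵒᵖ →ₗ[k] R :=
  LinearMap.mul' k R ∘ₗ LinearMap.lTensor R (unopL k R)

/-- Conjugation `r ↦ g r g⁻¹` as a `k`-linear map. -/
def conjL (g : Rˣ) : R →ₗ[k] R :=
  LinearMap.mulLeft k (g : R) ∘ₗ LinearMap.mulRight k ((g⁻¹ : Rˣ) : R)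

/-- Conjugation on the opposite algebra. -/
def conjOpL (g : Rˣ) : Rᵐᵒᵖ →ₗ[k] Rᵐᵒᵖ :=
  opL k R ∘ₗ conjL k R g ∘ₗ unopL k R

end Maps

/-- A linear map `R →ₗ A` induces `Rᵐᵒᵖ →ₗ Aᵐᵒᵖ`. -/
def opMapL (k : Type u) [Field k] {R : Type v} {A : Type w} [Ring R] [Algebra k R]
    [Ring A] [Algebra k A] (f : R →ₗ[k] A) : Rᵐᵒᵖ →ₗ[k] Aᵐᵒᵖ :=
  opL k A ∘ₗ f ∘ₗ unopL k R

variable (k : Type u) [Field k]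

/-- A Hopf-Galois algebra structure (quantum torsor) on an algebra `R`:
an algebra map `μ : R → R ⊗ Rᵒᵖ ⊗ R` which is coassociative and satisfies the
two counit-type axioms `(m ⊗ id) ∘ μ = η ⊗ id` and `(id ⊗ m) ∘ μ = id ⊗ η`. -/
structure HopfGaloisStr (R : Type v) [Ring R] [Algebra k R] where
  μ : R →ₐ[k] R ⊗[k] (Rᵐᵒᵖ ⊗[k] R)
  coassoc :
    LinearMap.lTensor R (LinearMap.lTensor Rᵐᵒᵖ μ.toLinearMap) ∘ₗ μ.toLinearMap
      = LinearMap.lTensor R (TensorProduct.assoc k Rᵐᵒᵖ R (Rᵐᵒᵖ ⊗[k] R)).toLinearMap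
        ∘ₗ (TensorProduct.assoc k R (Rᵐᵒᵖ ⊗[k] R) (Rᵐᵒᵖ ⊗[k] R)).toLinearMap
        ∘ₗ LinearMap.rTensor (Rᵐᵒᵖ ⊗[k] R) μ.toLinearMap ∘ₗ μ.toLinearMap
  mul12 : ∀ r : R,
    LinearMap.rTensor R (mulOpL k R) ((TensorProduct.assoc k R Rᵐᵒᵖ R).symm (μ r))
      = (1 : R) ⊗ₜ[k] r
  mul23 : ∀ r : R,
    LinearMap.lTensor R (opMulL k R) (μ r) = r ⊗ₜ[k] (1 : R)

namespace HopfGaloisStr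

variable {k} {R : Type v} [Ring R] [Algebra k R]

/-- A group-like element of a Hopf-Galois algebra: an invertible `g` with
`μ(g) = g ⊗ g⁻¹ ⊗ g`. -/
def IsGroupLike (H : HopfGaloisStr k R) (g : Rˣ) : Prop :=
  H.μ (g : R) = (g : R) ⊗ₜ[k] ((op ((g⁻¹ : Rˣ) : R)) ⊗ₜ[k] (g : R))

/-- A `(g,h)`-skew primitive element of a Hopf-Galois algebra:
`μ(x) = x ⊗ h⁻¹ ⊗ h − g ⊗ g⁻¹xh⁻¹ ⊗ h + g ⊗ g⁻¹ ⊗ x`. -/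
def IsSkewPrimitive (H : HopfGaloisStr k R) (g h : Rˣ) (x : R) : Prop :=
  H.μ x = x ⊗ₜ[k] ((op ((h⁻¹ : Rˣ) : R)) ⊗ₜ[k] ((h : Rˣ) : R))
    - (g : R) ⊗ₜ[k] ((op (((g⁻¹ : Rˣ) : R) * x * ((h⁻¹ : Rˣ) : R))) ⊗ₜ[k] (h : R))
    + (g : R) ⊗ₜ[k] ((op ((g⁻¹ : Rˣ) : R)) ⊗ₜ[k] x)

/-- A quasi-central group-like element: there is a character `α` on the
group-likes such that `x g = α(x) g x` for every group-like `x`. -/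
def IsQuasiCentral (H : HopfGaloisStr k R) (g : Rˣ) : Prop :=
  H.IsGroupLike g ∧ ∃ α : Rˣ → kˣ,
    (∀ x y : Rˣ, H.IsGroupLike x → H.IsGroupLike y → α (x * y) = α x * α y) ∧
    ∀ x : Rˣ, H.IsGroupLike x → (x : R) * (g : R) = ((α x : k)) • ((g : R) * (x : R))

end HopfGaloisStr

section HR

variable {k} {R : Type v} [Ring R] [Algebra k R]

/-- The comultiplication-type map on `Rᵐᵒᵖ ⊗ R`:
`x ⊗ y ↦ (x ⊗ y_(1)) ⊗ (y_(2) ⊗ y_(3))`. -/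
def deltaMap (H : HopfGaloisStr k R) :
    Rᵐᵒᵖ ⊗[k] R →ₗ[k] (Rᵐᵒᵖ ⊗[k] R) ⊗[k] (Rᵐᵒᵖ ⊗[k] R) :=
  (TensorProduct.assoc k Rᵐᵒᵖ R (Rᵐᵒᵖ ⊗[k] R)).symm.toLinearMap
    ∘ₗ LinearMap.lTensor Rᵐᵒᵖ H.μ.toLinearMap

/-- The map `x ⊗ y ↦ x y_(1) ⊗ (y_(2) ⊗ y_(3))`. -/
def PhiMap (H : HopfGaloisStr k R) :
    Rᵐᵒᵖ ⊗[k] R →ₗ[k] R ⊗[k] (Rᵐᵒᵖ ⊗[k] R) :=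
  LinearMap.rTensor (Rᵐᵒᵖ ⊗[k] R) (opMulL k R) ∘ₗ deltaMap H

/-- The underlying subspace of the Hopf algebra `H̲(R)` associated to a
Hopf-Galois algebra `R`: the set of `x ⊗ y ∈ Rᵒᵖ ⊗ R` such that
`x y_(1) ⊗ y_(2) ⊗ y_(3) = 1 ⊗ x ⊗ y`. -/
def HRsub (H : HopfGaloisStr k R) : Submodule k (Rᵐᵒᵖ ⊗[k] R) :=
  LinearMap.eqLocus (PhiMap H) ((TensorProduct.mk k R (Rᵐᵒᵖ ⊗[k] R)) 1)

/-- Group-like elements of `H̲(R)`: elements `u ∈ H̲(R)` with `Δ(u) = u ⊗ u`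
and `ε(u) = 1`. -/
def IsGroupLikeHR (H : HopfGaloisStr k R) (u : Rᵐᵒᵖ ⊗[k] R) : Prop :=
  u ∈ HRsub H ∧ deltaMap H u = u ⊗ₜ[k] u ∧ opMulL k R u = 1

/-- `(u₀,u₁)`-skew primitive elements of `H̲(R)`:
elements `x ∈ H̲(R)` with `Δ(x) = x ⊗ u₁ + u₀ ⊗ x`. -/
def IsSkewPrimitiveHR (H : HopfGaloisStr k R) (u₀ u₁ x : Rᵐᵒᵖ ⊗[k] R) : Prop :=
  x ∈ HRsub H ∧ deltaMap H x = x ⊗ₜ[k] u₁ + u₀ ⊗ₜ[k] x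

end HR

/-- A (not necessarily commutative or cocommutative) Hopf algebra structure
on an algebra `H`, spelled out in terms of linear-map identities. -/
structure HopfAlgStr (H : Type w) [Ring H] [Algebra k H] where
  comul : H →ₐ[k] H ⊗[k] H
  counit : H →ₐ[k] k
  coassoc : ∀ x : H,
    (TensorProduct.assoc k H H H) (LinearMap.rTensor H comul.toLinearMap (comul x))
      = LinearMap.lTensor H comul.toLinearMap (comul x)
  counit_id : ∀ x : H,
    (TensorProduct.lid k H) (LinearMap.rTensor H counit.toLinearMap (comul x)) = x
  id_counit : ∀ x : H,
    (TensorProduct.rid k H) (LinearMap.lTensor H counit.toLinearMap (comul x)) = x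
  antipode : H →ₗ[k] H
  antipode_left : ∀ x : H,
    LinearMap.mul' k H (LinearMap.rTensor H antipode (comul x))
      = algebraMap k H (counit x)
  antipode_right : ∀ x : H,
    LinearMap.mul' k H (LinearMap.lTensor H antipode (comul x))
      = algebraMap k H (counit x)

namespace HopfAlgStr

variable {k} {H : Type w} [Ring H] [Algebra k H]

/-- Group-like element of a Hopf algebra. -/
def IsGroupLikeElem (s : HopfAlgStr k H) (g : H) : Prop :=
  s.comul g = g ⊗ₜ[k] g ∧ s.counit g = 1

/-- `(g,h)`-skew primitive element of a Hopf algebra: `Δ(x) = x ⊗ h + g ⊗ x`. -/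
def IsSkewPrim (s : HopfAlgStr k H) (g h x : H) : Prop :=
  s.comul x = x ⊗ₜ[k] h + g ⊗ₜ[k] x

/-- Convolution product of two linear functionals. -/
def conv (s : HopfAlgStr k H) (α β : H →ₗ[k] k) : H →ₗ[k] k :=
  LinearMap.mul' k k ∘ₗ TensorProduct.map α β ∘ₗ s.comul.toLinearMap

/-- The map `r ↦ α(r_(1)) r_(2)`. -/
def sweedL (s : HopfAlgStr k H) (α : H →ₗ[k] k) : H →ₗ[k] H :=
  (TensorProduct.lid k H).toLinearMap ∘ₗ TensorProduct.map α LinearMap.id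
    ∘ₗ s.comul.toLinearMap

/-- The map `r ↦ (g r_(1) g⁻¹) α(r_(2))`. -/
def sweedConj (s : HopfAlgStr k H) (g : Hˣ) (α : H →ₗ[k] k) : H →ₗ[k] H :=
  (TensorProduct.rid k H).toLinearMap ∘ₗ TensorProduct.map (conjL k H g) α
    ∘ₗ s.comul.toLinearMap

end HopfAlgStr

section Galois

variable {k} {R : Type v} [Ring R] [Algebra k R] {H : Type w} [Ring H] [Algebra k H]

/-- The Galois map `R ⊗ R → R ⊗ H`, `r ⊗ s ↦ r s_(0) ⊗ s_(1)`, for a coaction `ρ`. -/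
def canMap (ρ : R →ₐ[k] R ⊗[k] H) : R ⊗[k] R →ₗ[k] R ⊗[k] H :=
  LinearMap.rTensor H (LinearMap.mul' k R)
    ∘ₗ (TensorProduct.assoc k R R H).symm.toLinearMap
    ∘ₗ LinearMap.lTensor R ρ.toLinearMap

/-- `R` is a right Hopf-Galois object over the Hopf algebra `(H, s)` via the
coaction `ρ`: `ρ` is a comodule-algebra structure with trivial coinvariants and
bijective Galois map. -/
structure IsHopfGaloisObject (s : HopfAlgStr k H) (ρ : R →ₐ[k] R ⊗[k] H) : Prop where
  coassoc : ∀ r : R,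
    (TensorProduct.assoc k R H H) (LinearMap.rTensor H ρ.toLinearMap (ρ r))
      = LinearMap.lTensor R s.comul.toLinearMap (ρ r)
  counit : ∀ r : R,
    (TensorProduct.rid k R) (LinearMap.lTensor R s.counit.toLinearMap (ρ r)) = r
  coinvariants : ∀ r : R, ρ r = r ⊗ₜ[k] (1 : H) → ∃ a : k, r = a • (1 : R)
  galois : Function.Bijective (canMap ρ)

end Galois

/-- A presentation of the generalized ambiskew polynomial algebra
`A(R, X, Y, τ, ω, c, ξ)`: an algebra `A` containing `R` (via `i`) and elements
`X, Y` subject to `X r = τ(r) X`, `Y r = ω(r) Y`, `XY − ξ YX = c`, which is a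
free left `R`-module with basis `{Xᵃ Yᵇ}`. -/
structure IsAmbiskew {R : Type v} [Ring R] [Algebra k R]
    (τ ω : R ≃ₐ[k] R) (c : R) (ξ : kˣ)
    {A : Type w} [Ring A] [Algebra k A] (i : R →ₐ[k] A) (X Y : A) : Prop where
  commX : ∀ r : R, X * i r = i (τ r) * X
  commY : ∀ r : R, Y * i r = i (ω r) * Y
  bracket : X * Y - (ξ : k) • (Y * X) = i c
  free : Function.Bijective (fun f : (ℕ × ℕ) →₀ R =>
    f.sum fun p r => i r * X ^ p.1 * Y ^ p.2)

end

/-- The Hopf-Galois structure map associated to a Hopf algebra structure `s`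
on `R`: `x ↦ x_(1) ⊗ S(x_(2)) ⊗ x_(3)`. -/
noncomputable def muOfHopf {k : Type u} [Field k] {R : Type v} [Ring R] [Algebra k R]
    (s : HopfAlgStr k R) : R →ₗ[k] R ⊗[k] (Rᵐᵒᵖ ⊗[k] R) :=
  LinearMap.lTensor R (LinearMap.rTensor R (opL k R ∘ₗ s.antipode))
    ∘ₗ LinearMap.lTensor R s.comul.toLinearMap ∘ₗ s.comul.toLinearMap


namespace Stmt1Aux
variable {k : Type u} [Field k] {R : Type v} [Ring R] [Algebra k R]

@[simp] lemma unopL_apply (x : Rᵐᵒᵖ) : unopL k R x = x.unop := rfl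
@[simp] lemma opL_apply (x : R) : opL k R x = op x := rfl
@[simp] lemma mulOpL_tmul (x : R) (y : Rᵐᵒᵖ) : mulOpL k R (x ⊗ₜ[k] y) = x * y.unop := by
  simp [mulOpL]
@[simp] lemma opMulL_tmul (x : Rᵐᵒᵖ) (y : R) : opMulL k R (x ⊗ₜ[k] y) = x.unop * y := by
  simp [opMulL]

variable (α : R →ₐ[k] k)

noncomputable def eMap (M : Type*) [AddCommMonoid M] [Module k M] :
    Rᵐᵒᵖ ⊗[k] M →ₗ[k] M :=
  (TensorProduct.lid k M).toLinearMap ∘ₗ LinearMap.rTensor M (α.toLinearMap ∘ₗ unopL k R)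

@[simp] lemma eMap_tmul (M : Type*) [AddCommMonoid M] [Module k M] (b : Rᵐᵒᵖ) (m : M) :
    eMap α M (b ⊗ₜ[k] m) = α b.unop • m := by simp [eMap]

/-- the antipode-defining map `x₁ ⊗ x₂ ⊗ x₃ ↦ α(x₁)α(x₃) • unop x₂`. -/
noncomputable def sMap : R ⊗[k] (Rᵐᵒᵖ ⊗[k] R) →ₗ[k] R :=
  (TensorProduct.lid k R).toLinearMap ∘ₗ
    TensorProduct.map α.toLinearMap
      ((TensorProduct.rid k R).toLinearMap ∘ₗ TensorProduct.map (unopL k R) α.toLinearMap)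

@[simp] lemma sMap_tmul (a : R) (b : Rᵐᵒᵖ) (c : R) :
    sMap α (a ⊗ₜ[k] (b ⊗ₜ[k] c)) = (α a * α c) • b.unop := by
  simp [sMap, smul_smul, mul_comm]

/-- `α` on the opposite algebra. -/
noncomputable def epsOp : Rᵐᵒᵖ →ₐ[k] k where
  toFun x := α x.unop
  map_one' := by simp
  map_mul' x y := by simp [mul_comm]
  map_zero' := by simp
  map_add' x y := by simp
  commutes' r := by simp [MulOpposite.algebraMap_apply]

@[simp] lemma epsOp_apply (x : Rᵐᵒᵖ) : epsOp α x = α x.unop := rfl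

variable (H : HopfGaloisStr k R)

/-- comultiplication as an algebra map. -/
noncomputable def ΔA : R →ₐ[k] R ⊗[k] R :=
  (Algebra.TensorProduct.map (AlgHom.id k R)
    ((Algebra.TensorProduct.lid k R).toAlgHom.comp
      (Algebra.TensorProduct.map (epsOp α) (AlgHom.id k R)))).comp H.μ

lemma ΔA_lin : (ΔA α H).toLinearMap
    = LinearMap.lTensor R (eMap α R) ∘ₗ H.μ.toLinearMap := by
  apply LinearMap.ext; intro x
  simp only [ΔA, AlgHom.comp_toLinearMap, LinearMap.comp_apply, AlgHom.toLinearMap_apply]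
  generalize H.μ x = z
  induction z using TensorProduct.induction_on with
  | zero => simp
  | tmul p w =>
      induction w using TensorProduct.induction_on with
      | zero => simp [tmul_zero]
      | tmul b c => simp [TensorProduct.smul_tmul', tmul_smul]
      | add u v hu hv => simp only [tmul_add, map_add, hu, hv]
  | add u v hu hv => simp only [map_add, hu, hv]


/-- `mul12` as a linear-map identity. -/
lemma M12 : LinearMap.rTensor R (mulOpL k R) ∘ₗ
      (TensorProduct.assoc k R Rᵐᵒᵖ R).symm.toLinearMap ∘ₗ H.μ.toLinearMap
    = TensorProduct.mk k R R 1 := by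
  apply LinearMap.ext; intro r
  simpa using H.mul12 r

/-- `mul23` as a linear-map identity. -/
lemma M23 : LinearMap.lTensor R (opMulL k R) ∘ₗ H.μ.toLinearMap
    = (TensorProduct.mk k R R).flip 1 := by
  apply LinearMap.ext; intro r
  simpa using H.mul23 r

/-- `μ` commutes with the scalar-collapse `eMap`. -/
lemma E1 (M N : Type*) [AddCommMonoid M] [Module k M] [AddCommMonoid N] [Module k N]
    (f : M →ₗ[k] N) :
    f ∘ₗ eMap α M = eMap α N ∘ₗ LinearMap.lTensor Rᵐᵒᵖ f := by
  ext b m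
  simp

/-- coassociativity, with the inverse rearrangement. -/
lemma CA' : LinearMap.rTensor (Rᵐᵒᵖ ⊗[k] R) H.μ.toLinearMap ∘ₗ H.μ.toLinearMap
    = (TensorProduct.assoc k R (Rᵐᵒᵖ ⊗[k] R) (Rᵐᵒᵖ ⊗[k] R)).symm.toLinearMap
      ∘ₗ LinearMap.lTensor R (TensorProduct.assoc k Rᵐᵒᵖ R (Rᵐᵒᵖ ⊗[k] R)).symm.toLinearMap
      ∘ₗ LinearMap.lTensor R (LinearMap.lTensor Rᵐᵒᵖ H.μ.toLinearMap) ∘ₗ H.μ.toLinearMap := by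
  have hW : (TensorProduct.assoc k Rᵐᵒᵖ R (Rᵐᵒᵖ ⊗[k] R)).symm.toLinearMap ∘ₗ
      (TensorProduct.assoc k Rᵐᵒᵖ R (Rᵐᵒᵖ ⊗[k] R)).toLinearMap = LinearMap.id :=
    LinearMap.ext fun z => by simp
  apply LinearMap.ext; intro x
  have h := LinearMap.congr_fun H.coassoc x
  simp only [LinearMap.comp_apply] at h ⊢
  rw [h, ← LinearMap.comp_apply (LinearMap.lTensor R _) (LinearMap.lTensor R _),
      ← LinearMap.lTensor_comp, hW, LinearMap.lTensor_id]
  simp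

lemma F1 : LinearMap.lTensor R
      (LinearMap.lTensor R (eMap α R) ∘ₗ eMap α (R ⊗[k] (Rᵐᵒᵖ ⊗[k] R)))
      ∘ₗ LinearMap.lTensor R (TensorProduct.assoc k Rᵐᵒᵖ R (Rᵐᵒᵖ ⊗[k] R)).toLinearMap
      ∘ₗ (TensorProduct.assoc k R (Rᵐᵒᵖ ⊗[k] R) (Rᵐᵒᵖ ⊗[k] R)).toLinearMap
    = (TensorProduct.assoc k R R R).toLinearMap
      ∘ₗ TensorProduct.map (LinearMap.lTensor R (eMap α R)) (eMap α R) := by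
  ext p q r b c
  simp [TensorProduct.smul_tmul', tmul_smul, smul_smul, mul_comm]
  simp only [← TensorProduct.smul_tmul', TensorProduct.tmul_smul]

lemma L3a (x : R) : LinearMap.lTensor R (ΔA α H).toLinearMap ((ΔA α H) x)
    = (TensorProduct.assoc k R R R)
        (TensorProduct.map (LinearMap.lTensor R (eMap α R)) (eMap α R)
          (LinearMap.rTensor (Rᵐᵒᵖ ⊗[k] R) H.μ.toLinearMap (H.μ x))) := by
  have hΔ : (ΔA α H) x = LinearMap.lTensor R (eMap α R) (H.μ.toLinearMap x) :=
    LinearMap.congr_fun (ΔA_lin α H) x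
  rw [hΔ, ← LinearMap.comp_apply (LinearMap.lTensor R (ΔA α H).toLinearMap),
    ← LinearMap.lTensor_comp]
  have hDe : (ΔA α H).toLinearMap ∘ₗ eMap α R
      = (LinearMap.lTensor R (eMap α R) ∘ₗ eMap α (R ⊗[k] (Rᵐᵒᵖ ⊗[k] R)))
          ∘ₗ LinearMap.lTensor Rᵐᵒᵖ H.μ.toLinearMap := by
    rw [ΔA_lin, LinearMap.comp_assoc, E1 α _ _ H.μ.toLinearMap, ← LinearMap.comp_assoc]
  rw [hDe, LinearMap.lTensor_comp, LinearMap.comp_apply]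
  have hCA := LinearMap.congr_fun H.coassoc x
  simp only [LinearMap.comp_apply] at hCA
  rw [hCA]
  have hF := LinearMap.congr_fun (F1 α)
    (LinearMap.rTensor (Rᵐᵒᵖ ⊗[k] R) H.μ.toLinearMap (H.μ.toLinearMap x))
  simp only [LinearMap.comp_apply, LinearEquiv.coe_coe] at hF ⊢
  rw [hF]
  rfl

lemma L3b (x : R) : (TensorProduct.assoc k R R R)
    (LinearMap.rTensor R (ΔA α H).toLinearMap ((ΔA α H) x))
    = LinearMap.lTensor R (ΔA α H).toLinearMap ((ΔA α H) x) := by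
  rw [L3a α H x]
  have key : LinearMap.rTensor R (ΔA α H).toLinearMap ∘ₗ LinearMap.lTensor R (eMap α R)
      = TensorProduct.map (LinearMap.lTensor R (eMap α R)) (eMap α R)
        ∘ₗ LinearMap.rTensor (Rᵐᵒᵖ ⊗[k] R) H.μ.toLinearMap := by
    ext a b c
    simp [LinearMap.congr_fun (ΔA_lin α H) a]
  have hx : (ΔA α H) x = LinearMap.lTensor R (eMap α R) (H.μ.toLinearMap x) :=
    LinearMap.congr_fun (ΔA_lin α H) x
  rw [hx, ← LinearMap.comp_apply (LinearMap.rTensor R (ΔA α H).toLinearMap), key,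
    LinearMap.comp_apply]
  rfl

lemma counit_id' (x : R) :
    (TensorProduct.lid k R) (LinearMap.rTensor R α.toLinearMap ((ΔA α H) x)) = x := by
  have hx : (ΔA α H) x = LinearMap.lTensor R (eMap α R) (H.μ.toLinearMap x) :=
    LinearMap.congr_fun (ΔA_lin α H) x
  rw [hx]
  have key : (TensorProduct.lid k R).toLinearMap ∘ₗ LinearMap.rTensor R α.toLinearMap
        ∘ₗ LinearMap.lTensor R (eMap α R)
      = ((TensorProduct.lid k R).toLinearMap ∘ₗ LinearMap.rTensor R α.toLinearMap) ∘ₗ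
        LinearMap.rTensor R (mulOpL k R) ∘ₗ (TensorProduct.assoc k R Rᵐᵒᵖ R).symm.toLinearMap := by
    ext a b c
    simp [smul_smul, mul_comm]
  have hkey := LinearMap.congr_fun key (H.μ.toLinearMap x)
  simp only [LinearMap.comp_apply, LinearEquiv.coe_coe] at hkey
  rw [hkey]
  have h12 := H.mul12 x
  rw [show H.μ x = H.μ.toLinearMap x from rfl] at h12
  rw [h12]
  simp

lemma id_counit' (x : R) :
    (TensorProduct.rid k R) (LinearMap.lTensor R α.toLinearMap ((ΔA α H) x)) = x := by
  have hx : (ΔA α H) x = LinearMap.lTensor R (eMap α R) (H.μ.toLinearMap x) :=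
    LinearMap.congr_fun (ΔA_lin α H) x
  rw [hx]
  have key : (TensorProduct.rid k R).toLinearMap ∘ₗ LinearMap.lTensor R α.toLinearMap
        ∘ₗ LinearMap.lTensor R (eMap α R)
      = ((TensorProduct.rid k R).toLinearMap ∘ₗ LinearMap.lTensor R α.toLinearMap) ∘ₗ
        LinearMap.lTensor R (opMulL k R) := by
    ext a b c
    simp [smul_smul, mul_comm]
  have hkey := LinearMap.congr_fun key (H.μ.toLinearMap x)
  simp only [LinearMap.comp_apply, LinearEquiv.coe_coe] at hkey
  rw [hkey]
  have h23 := H.mul23 x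
  rw [show H.μ x = H.μ.toLinearMap x from rfl] at h23
  rw [h23]
  simp

/-- The antipode. -/
noncomputable def SL : R →ₗ[k] R := sMap α ∘ₗ H.μ.toLinearMap

lemma antipode_left' (x : R) :
    LinearMap.mul' k R (LinearMap.rTensor R (SL α H) ((ΔA α H) x))
      = algebraMap k R (α x) := by
  have hx : (ΔA α H) x = LinearMap.lTensor R (eMap α R) (H.μ.toLinearMap x) :=
    LinearMap.congr_fun (ΔA_lin α H) x
  rw [hx]
  have key3 : LinearMap.mul' k R ∘ₗ LinearMap.rTensor R (SL α H)
        ∘ₗ LinearMap.lTensor R (eMap α R)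
      = (LinearMap.mul' k R ∘ₗ TensorProduct.map (sMap α) (eMap α R))
        ∘ₗ LinearMap.rTensor (Rᵐᵒᵖ ⊗[k] R) H.μ.toLinearMap := by
    ext a b c
    simp [SL]
  have h3 := LinearMap.congr_fun key3 (H.μ.toLinearMap x)
  simp only [LinearMap.comp_apply] at h3
  rw [h3]
  have hca := LinearMap.congr_fun (CA' H) x
  simp only [LinearMap.comp_apply, LinearEquiv.coe_coe] at hca
  rw [hca]
  have F4 : (LinearMap.mul' k R ∘ₗ TensorProduct.map (sMap α) (eMap α R))
        ∘ₗ (TensorProduct.assoc k R (Rᵐᵒᵖ ⊗[k] R) (Rᵐᵒᵖ ⊗[k] R)).symm.toLinearMap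
        ∘ₗ LinearMap.lTensor R (TensorProduct.assoc k Rᵐᵒᵖ R (Rᵐᵒᵖ ⊗[k] R)).symm.toLinearMap
      = ((TensorProduct.lid k R).toLinearMap ∘ₗ
          TensorProduct.map α.toLinearMap
            (opMulL k R ∘ₗ LinearMap.lTensor Rᵐᵒᵖ
              ((TensorProduct.lid k R).toLinearMap ∘ₗ LinearMap.rTensor R α.toLinearMap)))
        ∘ₗ LinearMap.lTensor R (LinearMap.lTensor Rᵐᵒᵖ
            (LinearMap.rTensor R (mulOpL k R)
              ∘ₗ (TensorProduct.assoc k R Rᵐᵒᵖ R).symm.toLinearMap)) := by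
    ext p q c d f
    simp [smul_smul, mul_comm, mul_left_comm]
  have h4 := LinearMap.congr_fun F4
    (LinearMap.lTensor R (LinearMap.lTensor Rᵐᵒᵖ H.μ.toLinearMap) (H.μ.toLinearMap x))
  simp only [LinearMap.comp_apply, LinearEquiv.coe_coe] at h4
  rw [h4]
  have hM : LinearMap.lTensor R (LinearMap.lTensor Rᵐᵒᵖ
        (LinearMap.rTensor R (mulOpL k R)
          ∘ₗ (TensorProduct.assoc k R Rᵐᵒᵖ R).symm.toLinearMap))
        ∘ₗ LinearMap.lTensor R (LinearMap.lTensor Rᵐᵒᵖ H.μ.toLinearMap)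
      = LinearMap.lTensor R (LinearMap.lTensor Rᵐᵒᵖ ((TensorProduct.mk k R R) 1)) := by
    rw [← LinearMap.lTensor_comp, ← LinearMap.lTensor_comp, LinearMap.comp_assoc, M12 H]
  have hM' := LinearMap.congr_fun hM (H.μ.toLinearMap x)
  simp only [LinearMap.comp_apply] at hM'
  rw [hM']
  have F5 : ((TensorProduct.lid k R).toLinearMap ∘ₗ
          TensorProduct.map α.toLinearMap
            (opMulL k R ∘ₗ LinearMap.lTensor Rᵐᵒᵖ
              ((TensorProduct.lid k R).toLinearMap ∘ₗ LinearMap.rTensor R α.toLinearMap)))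
        ∘ₗ LinearMap.lTensor R (LinearMap.lTensor Rᵐᵒᵖ ((TensorProduct.mk k R R) 1))
      = ((TensorProduct.lid k R).toLinearMap ∘ₗ LinearMap.rTensor R α.toLinearMap)
        ∘ₗ LinearMap.lTensor R (opMulL k R) := by
    ext a b c
    simp
  have h5 := LinearMap.congr_fun F5 (H.μ.toLinearMap x)
  simp only [LinearMap.comp_apply, LinearEquiv.coe_coe] at h5
  rw [h5]
  have h23 := H.mul23 x
  rw [show H.μ x = H.μ.toLinearMap x from rfl] at h23
  rw [h23]
  simp [Algebra.algebraMap_eq_smul_one]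

lemma antipode_right' (x : R) :
    LinearMap.mul' k R (LinearMap.lTensor R (SL α H) ((ΔA α H) x))
      = algebraMap k R (α x) := by
  have hx : (ΔA α H) x = LinearMap.lTensor R (eMap α R) (H.μ.toLinearMap x) :=
    LinearMap.congr_fun (ΔA_lin α H) x
  rw [hx]
  -- step 1: mul' ∘ lTensor (SL ∘ e) = (mul' ∘ lTensor (sMap ∘ eMap')) ∘ lTensor (lTensor μ)
  have key5 : LinearMap.mul' k R ∘ₗ LinearMap.lTensor R (SL α H)
        ∘ₗ LinearMap.lTensor R (eMap α R)
      = (LinearMap.mul' k R ∘ₗ LinearMap.lTensor R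
          (sMap α ∘ₗ eMap α (R ⊗[k] (Rᵐᵒᵖ ⊗[k] R))))
        ∘ₗ LinearMap.lTensor R (LinearMap.lTensor Rᵐᵒᵖ H.μ.toLinearMap) := by
    ext a b c
    simp [SL]
  have h5 := LinearMap.congr_fun key5 (H.μ.toLinearMap x)
  simp only [LinearMap.comp_apply] at h5
  rw [h5]
  -- step 2: CA (forward direction)
  have hca := LinearMap.congr_fun H.coassoc x
  simp only [LinearMap.comp_apply, LinearEquiv.coe_coe] at hca
  rw [hca]
  -- step 3: F6
  have F6 : (LinearMap.mul' k R ∘ₗ LinearMap.lTensor R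
          (sMap α ∘ₗ eMap α (R ⊗[k] (Rᵐᵒᵖ ⊗[k] R))))
        ∘ₗ LinearMap.lTensor R (TensorProduct.assoc k Rᵐᵒᵖ R (Rᵐᵒᵖ ⊗[k] R)).toLinearMap
        ∘ₗ (TensorProduct.assoc k R (Rᵐᵒᵖ ⊗[k] R) (Rᵐᵒᵖ ⊗[k] R)).toLinearMap
      = (mulOpL k R ∘ₗ TensorProduct.map
          ((TensorProduct.rid k R).toLinearMap ∘ₗ LinearMap.lTensor R α.toLinearMap)
          ((TensorProduct.rid k Rᵐᵒᵖ).toLinearMap ∘ₗ LinearMap.lTensor Rᵐᵒᵖ α.toLinearMap))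
        ∘ₗ LinearMap.rTensor (Rᵐᵒᵖ ⊗[k] R) (LinearMap.lTensor R (opMulL k R)) := by
    ext p q r b c
    simp [smul_smul, mul_comm, mul_left_comm]
  have h6 := LinearMap.congr_fun F6
    (LinearMap.rTensor (Rᵐᵒᵖ ⊗[k] R) H.μ.toLinearMap (H.μ.toLinearMap x))
  simp only [LinearMap.comp_apply, LinearEquiv.coe_coe] at h6
  rw [h6]
  -- step 4: collapse the first factor via mul23
  have hM : LinearMap.rTensor (Rᵐᵒᵖ ⊗[k] R) (LinearMap.lTensor R (opMulL k R))
        ∘ₗ LinearMap.rTensor (Rᵐᵒᵖ ⊗[k] R) H.μ.toLinearMap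
      = LinearMap.rTensor (Rᵐᵒᵖ ⊗[k] R) ((TensorProduct.mk k R R).flip 1) := by
    rw [← LinearMap.rTensor_comp, M23 H]
  have hM' := LinearMap.congr_fun hM (H.μ.toLinearMap x)
  simp only [LinearMap.comp_apply] at hM'
  rw [hM']
  -- step 5: F7
  have F7 : (mulOpL k R ∘ₗ TensorProduct.map
          ((TensorProduct.rid k R).toLinearMap ∘ₗ LinearMap.lTensor R α.toLinearMap)
          ((TensorProduct.rid k Rᵐᵒᵖ).toLinearMap ∘ₗ LinearMap.lTensor Rᵐᵒᵖ α.toLinearMap))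
        ∘ₗ LinearMap.rTensor (Rᵐᵒᵖ ⊗[k] R) ((TensorProduct.mk k R R).flip 1)
      = ((TensorProduct.rid k R).toLinearMap ∘ₗ LinearMap.lTensor R α.toLinearMap)
        ∘ₗ LinearMap.rTensor R (mulOpL k R)
        ∘ₗ (TensorProduct.assoc k R Rᵐᵒᵖ R).symm.toLinearMap := by
    ext a b c
    simp [smul_smul, mul_comm]
  have h7 := LinearMap.congr_fun F7 (H.μ.toLinearMap x)
  simp only [LinearMap.comp_apply, LinearEquiv.coe_coe] at h7
  rw [h7]
  have h12 := H.mul12 x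
  rw [show H.μ x = H.μ.toLinearMap x from rfl] at h12
  rw [h12]
  simp [Algebra.algebraMap_eq_smul_one]

/-- The Hopf algebra structure on `R` induced by a character `α`. -/
noncomputable def hopfStr : HopfAlgStr k R where
  comul := ΔA α H
  counit := α
  coassoc := L3b α H
  counit_id := counit_id' α H
  id_counit := id_counit' α H
  antipode := SL α H
  antipode_left := antipode_left' α H
  antipode_right := antipode_right' α H

lemma mu_eq_muOfHopf (x : R) : muOfHopf (hopfStr α H) x = H.μ x := by
  rw [muOfHopf]
  simp only [LinearMap.comp_apply]
  rw [show (hopfStr α H).comul = ΔA α H from rfl,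
      show (hopfStr α H).antipode = SL α H from rfl,
      show (ΔA α H).toLinearMap x = (ΔA α H) x from rfl, L3a α H x,
      show H.μ x = H.μ.toLinearMap x from rfl]
  -- F8 : push the inner μ (inside the antipode) to an expansion of the first leg
  have F8 : LinearMap.lTensor R (LinearMap.rTensor R (opL k R ∘ₗ SL α H))
        ∘ₗ (TensorProduct.assoc k R R R).toLinearMap
        ∘ₗ TensorProduct.map (LinearMap.lTensor R (eMap α R)) (eMap α R)
      = (LinearMap.lTensor R (LinearMap.rTensor R (opL k R ∘ₗ sMap α))
          ∘ₗ (TensorProduct.assoc k R (R ⊗[k] (Rᵐᵒᵖ ⊗[k] R)) R).toLinearMap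
          ∘ₗ TensorProduct.map
              (LinearMap.lTensor R (eMap α (R ⊗[k] (Rᵐᵒᵖ ⊗[k] R)))) (eMap α R))
        ∘ₗ LinearMap.rTensor (Rᵐᵒᵖ ⊗[k] R)
            (LinearMap.lTensor R (LinearMap.lTensor Rᵐᵒᵖ H.μ.toLinearMap)) := by
    ext p q r b c
    simp [SL, ← TensorProduct.smul_tmul', TensorProduct.tmul_smul]
  have h8 := LinearMap.congr_fun F8
    (LinearMap.rTensor (Rᵐᵒᵖ ⊗[k] R) H.μ.toLinearMap (H.μ.toLinearMap x))
  simp only [LinearMap.comp_apply, LinearEquiv.coe_coe] at h8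
  rw [h8]
  -- expand via coassoc inside the first leg
  have hB : LinearMap.rTensor (Rᵐᵒᵖ ⊗[k] R)
        (LinearMap.lTensor R (LinearMap.lTensor Rᵐᵒᵖ H.μ.toLinearMap))
        ∘ₗ LinearMap.rTensor (Rᵐᵒᵖ ⊗[k] R) H.μ.toLinearMap
      = LinearMap.rTensor (Rᵐᵒᵖ ⊗[k] R)
          (LinearMap.lTensor R (TensorProduct.assoc k Rᵐᵒᵖ R (Rᵐᵒᵖ ⊗[k] R)).toLinearMap)
        ∘ₗ LinearMap.rTensor (Rᵐᵒᵖ ⊗[k] R)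
            (TensorProduct.assoc k R (Rᵐᵒᵖ ⊗[k] R) (Rᵐᵒᵖ ⊗[k] R)).toLinearMap
        ∘ₗ LinearMap.rTensor (Rᵐᵒᵖ ⊗[k] R)
            (LinearMap.rTensor (Rᵐᵒᵖ ⊗[k] R) H.μ.toLinearMap)
        ∘ₗ LinearMap.rTensor (Rᵐᵒᵖ ⊗[k] R) H.μ.toLinearMap := by
    rw [← LinearMap.rTensor_comp, H.coassoc, LinearMap.rTensor_comp,
      LinearMap.rTensor_comp, LinearMap.rTensor_comp]
  have hB' := LinearMap.congr_fun hB (H.μ.toLinearMap x)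
  simp only [LinearMap.comp_apply] at hB'
  rw [hB']
  -- F_Xi : now the doubly-expanded first leg collapses
  have FXi : (LinearMap.lTensor R (LinearMap.rTensor R (opL k R ∘ₗ sMap α))
          ∘ₗ (TensorProduct.assoc k R (R ⊗[k] (Rᵐᵒᵖ ⊗[k] R)) R).toLinearMap
          ∘ₗ TensorProduct.map
              (LinearMap.lTensor R (eMap α (R ⊗[k] (Rᵐᵒᵖ ⊗[k] R)))) (eMap α R))
        ∘ₗ LinearMap.rTensor (Rᵐᵒᵖ ⊗[k] R)
            (LinearMap.lTensor R (TensorProduct.assoc k Rᵐᵒᵖ R (Rᵐᵒᵖ ⊗[k] R)).toLinearMap)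
        ∘ₗ LinearMap.rTensor (Rᵐᵒᵖ ⊗[k] R)
            (TensorProduct.assoc k R (Rᵐᵒᵖ ⊗[k] R) (Rᵐᵒᵖ ⊗[k] R)).toLinearMap
      = ((TensorProduct.assoc k R Rᵐᵒᵖ R).toLinearMap
          ∘ₗ TensorProduct.map
              (LinearMap.lTensor R
                ((TensorProduct.rid k Rᵐᵒᵖ).toLinearMap ∘ₗ LinearMap.lTensor Rᵐᵒᵖ α.toLinearMap))
              (eMap α R))
        ∘ₗ LinearMap.rTensor (Rᵐᵒᵖ ⊗[k] R)
            (LinearMap.rTensor (Rᵐᵒᵖ ⊗[k] R)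
              ((TensorProduct.rid k R).toLinearMap
                ∘ₗ LinearMap.lTensor R (α.toLinearMap ∘ₗ opMulL k R))) := by
    ext p q r d f b c
    simp [smul_smul, mul_comm, mul_left_comm, ← TensorProduct.smul_tmul',
      TensorProduct.tmul_smul]
  have hXi := LinearMap.congr_fun FXi
    (LinearMap.rTensor (Rᵐᵒᵖ ⊗[k] R) (LinearMap.rTensor (Rᵐᵒᵖ ⊗[k] R) H.μ.toLinearMap)
      (LinearMap.rTensor (Rᵐᵒᵖ ⊗[k] R) H.μ.toLinearMap (H.μ.toLinearMap x)))
  simp only [LinearMap.comp_apply, LinearEquiv.coe_coe] at hXi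
  rw [hXi]
  -- the double expansion collapses to nothing
  have hColl : ((TensorProduct.rid k R).toLinearMap
        ∘ₗ LinearMap.lTensor R (α.toLinearMap ∘ₗ opMulL k R)) ∘ₗ H.μ.toLinearMap
      = LinearMap.id := by
    apply LinearMap.ext; intro y
    have h23 := H.mul23 y
    rw [show H.μ y = H.μ.toLinearMap y from rfl] at h23
    simp only [LinearMap.comp_apply, LinearMap.lTensor_comp, LinearEquiv.coe_coe]
    rw [h23]
    simp
  have hCC : LinearMap.rTensor (Rᵐᵒᵖ ⊗[k] R)
        (LinearMap.rTensor (Rᵐᵒᵖ ⊗[k] R)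
          ((TensorProduct.rid k R).toLinearMap
            ∘ₗ LinearMap.lTensor R (α.toLinearMap ∘ₗ opMulL k R)))
        ∘ₗ LinearMap.rTensor (Rᵐᵒᵖ ⊗[k] R)
            (LinearMap.rTensor (Rᵐᵒᵖ ⊗[k] R) H.μ.toLinearMap)
      = LinearMap.id := by
    rw [← LinearMap.rTensor_comp, ← LinearMap.rTensor_comp, hColl,
      LinearMap.rTensor_id, LinearMap.rTensor_id]
  have hCC' := LinearMap.congr_fun hCC
    (LinearMap.rTensor (Rᵐᵒᵖ ⊗[k] R) H.μ.toLinearMap (H.μ.toLinearMap x))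
  simp only [LinearMap.comp_apply, LinearMap.id_apply] at hCC'
  rw [hCC']
  -- now use CA' to re-expand the third leg and collapse with mul12
  have hca := LinearMap.congr_fun (CA' H) x
  simp only [LinearMap.comp_apply, LinearEquiv.coe_coe] at hca
  rw [hca]
  have F11 : ((TensorProduct.assoc k R Rᵐᵒᵖ R).toLinearMap
          ∘ₗ TensorProduct.map
              (LinearMap.lTensor R
                ((TensorProduct.rid k Rᵐᵒᵖ).toLinearMap ∘ₗ LinearMap.lTensor Rᵐᵒᵖ α.toLinearMap))
              (eMap α R))
        ∘ₗ (TensorProduct.assoc k R (Rᵐᵒᵖ ⊗[k] R) (Rᵐᵒᵖ ⊗[k] R)).symm.toLinearMap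
        ∘ₗ LinearMap.lTensor R (TensorProduct.assoc k Rᵐᵒᵖ R (Rᵐᵒᵖ ⊗[k] R)).symm.toLinearMap
      = LinearMap.lTensor R (LinearMap.lTensor Rᵐᵒᵖ
            ((TensorProduct.lid k R).toLinearMap ∘ₗ LinearMap.rTensor R α.toLinearMap))
        ∘ₗ LinearMap.lTensor R (LinearMap.lTensor Rᵐᵒᵖ
            (LinearMap.rTensor R (mulOpL k R)
              ∘ₗ (TensorProduct.assoc k R Rᵐᵒᵖ R).symm.toLinearMap)) := by
    ext p q c d f
    simp [smul_smul, mul_comm, mul_left_comm, ← TensorProduct.smul_tmul',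
      TensorProduct.tmul_smul]
  have h11 := LinearMap.congr_fun F11
    (LinearMap.lTensor R (LinearMap.lTensor Rᵐᵒᵖ H.μ.toLinearMap) (H.μ.toLinearMap x))
  simp only [LinearMap.comp_apply, LinearEquiv.coe_coe] at h11
  rw [h11]
  have hM : LinearMap.lTensor R (LinearMap.lTensor Rᵐᵒᵖ
        (LinearMap.rTensor R (mulOpL k R)
          ∘ₗ (TensorProduct.assoc k R Rᵐᵒᵖ R).symm.toLinearMap))
        ∘ₗ LinearMap.lTensor R (LinearMap.lTensor Rᵐᵒᵖ H.μ.toLinearMap)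
      = LinearMap.lTensor R (LinearMap.lTensor Rᵐᵒᵖ ((TensorProduct.mk k R R) 1)) := by
    rw [← LinearMap.lTensor_comp, ← LinearMap.lTensor_comp, LinearMap.comp_assoc, M12 H]
  have hM' := LinearMap.congr_fun hM (H.μ.toLinearMap x)
  simp only [LinearMap.comp_apply] at hM'
  rw [hM']
  have F12 : LinearMap.lTensor R (LinearMap.lTensor Rᵐᵒᵖ
            ((TensorProduct.lid k R).toLinearMap ∘ₗ LinearMap.rTensor R α.toLinearMap))
        ∘ₗ LinearMap.lTensor R (LinearMap.lTensor Rᵐᵒᵖ ((TensorProduct.mk k R R) 1))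
      = LinearMap.id := by
    ext a b c
    simp
  have h12 := LinearMap.congr_fun F12 (H.μ.toLinearMap x)
  simp only [LinearMap.comp_apply, LinearMap.id_apply] at h12
  rw [h12]

end Stmt1Aux

/-- A Hopf-Galois algebra `(R,μ)` arises from a Hopf algebra
structure on `R` via `μ(x) = x_(1) ⊗ S(x_(2)) ⊗ x_(3)` if and only if there
exists an algebra map `α : R → k`.  In that case the formulas
`Δ(x) = α(x_(2)) x_(1) ⊗ x_(3)`, counit `α`, `S(x) = α(x_(1) x_(3)) x_(2)`
define a Hopf algebra structure on `R` whose associated Hopf-Galois structure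
is the given `μ`. -/
theorem stmt1 {k : Type u} [Field k] {R : Type v} [Ring R] [Algebra k R]
    [Nontrivial R] (H : HopfGaloisStr k R) :
    ((∃ s : HopfAlgStr k R, ∀ x : R, H.μ x = muOfHopf s x) ↔
      Nonempty (R →ₐ[k] k)) ∧
    (∀ α : R →ₐ[k] k, ∃ s : HopfAlgStr k R,
      -- the counit is `α`
      s.counit = α ∧
      -- `Δ(x) = α(x_(2)) x_(1) ⊗ x_(3)`
      (∀ x : R, s.comul x =
        LinearMap.lTensor R
          ((TensorProduct.lid k R).toLinearMap
            ∘ₗ LinearMap.rTensor R (α.toLinearMap ∘ₗ unopL k R)) (H.μ x)) ∧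
      -- `S(x) = α(x_(1) x_(3)) x_(2)`
      (∀ x : R, s.antipode x =
        (TensorProduct.lid k R)
          (TensorProduct.map α.toLinearMap
            ((TensorProduct.rid k R).toLinearMap
              ∘ₗ TensorProduct.map (unopL k R) α.toLinearMap) (H.μ x))) ∧
      -- the associated Hopf-Galois structure is the given `μ`
      (∀ x : R, H.μ x = muOfHopf s x)) := by
  have main : ∀ α : R →ₐ[k] k, ∃ s : HopfAlgStr k R,
      s.counit = α ∧
      (∀ x : R, s.comul x =
        LinearMap.lTensor R
          ((TensorProduct.lid k R).toLinearMap
            ∘ₗ LinearMap.rTensor R (α.toLinearMap ∘ₗ unopL k R)) (H.μ x)) ∧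
      (∀ x : R, s.antipode x =
        (TensorProduct.lid k R)
          (TensorProduct.map α.toLinearMap
            ((TensorProduct.rid k R).toLinearMap
              ∘ₗ TensorProduct.map (unopL k R) α.toLinearMap) (H.μ x))) ∧
      (∀ x : R, H.μ x = muOfHopf s x) := by
    intro α
    refine ⟨Stmt1Aux.hopfStr α H, rfl, ?_, ?_, ?_⟩
    · intro x
      exact LinearMap.congr_fun (Stmt1Aux.ΔA_lin α H) x
    · intro x
      rfl
    · intro x
      exact (Stmt1Aux.mu_eq_muOfHopf α H x).symm
  constructor
  · constructor
    · rintro ⟨s, -⟩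
      exact ⟨s.counit⟩
    · rintro ⟨α⟩
      obtain ⟨s, -, -, -, h⟩ := main α
      exact ⟨s, h⟩
  · exact main
end

section
/- The first Weyl algebra A₁(k) = k⟨x,y | xy − yx = 1⟩ over a field k is a Hopf-Galois algebra with structure map μ determined by μ(x) = x⊗1⊗1 − 1⊗x⊗1 + 1⊗1⊗x and μ(y) = y⊗1⊗1 − 1⊗y⊗1 + 1⊗1⊗y; that is, these formulas extend to a well-defined algebra map μ : A₁(k) → A₁(k) ⊗ A₁(k)^op ⊗ A₁(k) satisfying the Hopf-Galois axioms. -/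
open TensorProduct MulOpposite

set_option synthInstance.maxHeartbeats 1000000
set_option maxHeartbeats 1000000

/-- The defining relation of the first Weyl algebra `A₁(k)`. -/
inductive weylRel (k : Type u) [Field k] :
    FreeAlgebra k (Fin 2) → FreeAlgebra k (Fin 2) → Prop
  | rel : weylRel k
      (FreeAlgebra.ι k (0 : Fin 2) * FreeAlgebra.ι k (1 : Fin 2)
        - FreeAlgebra.ι k (1 : Fin 2) * FreeAlgebra.ι k (0 : Fin 2)) 1

/-- The first Weyl algebra `A₁(k) = k⟨x,y | xy − yx = 1⟩`. -/
def Weyl (k : Type u) [Field k] : Type u := RingQuot (weylRel k)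

instance (k : Type u) [Field k] : Ring (Weyl k) :=
  inferInstanceAs (Ring (RingQuot (weylRel k)))

instance (k : Type u) [Field k] : Algebra k (Weyl k) :=
  inferInstanceAs (Algebra k (RingQuot (weylRel k)))

/-- The generator `x` of the Weyl algebra. -/
def weylX (k : Type u) [Field k] : Weyl k :=
  RingQuot.mkAlgHom k (weylRel k) (FreeAlgebra.ι k (0 : Fin 2))

/-- The generator `y` of the Weyl algebra. -/
def weylY (k : Type u) [Field k] : Weyl k :=
  RingQuot.mkAlgHom k (weylRel k) (FreeAlgebra.ι k (1 : Fin 2))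

noncomputable section Stmt2AuxSection

namespace Stmt2Aux

open TensorProduct MulOpposite

variable (k : Type u) [Field k]

section Generic

variable (R : Type v) [Ring R] [Algebra k R]

lemma unopL_apply (x : Rᵐᵒᵖ) : unopL k R x = x.unop := rfl

section MulHom

variable {A : Type*} {B : Type*} {C : Type*}
  [AddCommMonoid A] [Module k A] [AddCommMonoid B] [Module k B]
  [AddCommMonoid C] [Module k C]

/-- tensor product of two "multiplication" bilinear maps -/
def tmulMul (mA : A →ₗ[k] A →ₗ[k] A) (mB : B →ₗ[k] B →ₗ[k] B) :
    (A ⊗[k] B) →ₗ[k] (A ⊗[k] B) →ₗ[k] (A ⊗[k] B) :=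
  TensorProduct.homTensorHomMap (RingHom.id k) A B A B ∘ₗ TensorProduct.map mA mB

@[simp] lemma tmulMul_tmul (mA : A →ₗ[k] A →ₗ[k] A) (mB : B →ₗ[k] B →ₗ[k] B)
    (a a' : A) (b b' : B) :
    tmulMul k mA mB (a ⊗ₜ b) (a' ⊗ₜ b') = mA a a' ⊗ₜ[k] mB b b' := by
  simp [tmulMul]

/-- `f` intertwines the bilinear maps `mA` and `mB`. -/
abbrev IsMulHom (mA : A →ₗ[k] A →ₗ[k] A) (mB : B →ₗ[k] B →ₗ[k] B)
    (f : A →ₗ[k] B) : Prop :=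
  mA.compr₂ f = mB.compl₁₂ f f

lemma IsMulHom.apply {mA : A →ₗ[k] A →ₗ[k] A} {mB : B →ₗ[k] B →ₗ[k] B}
    {f : A →ₗ[k] B} (h : IsMulHom k mA mB f) (u v : A) :
    f (mA u v) = mB (f u) (f v) := by
  have := LinearMap.congr_fun (LinearMap.congr_fun h u) v
  simpa using this

lemma isMulHom_lTensor {mA : A →ₗ[k] A →ₗ[k] A} {mB : B →ₗ[k] B →ₗ[k] B}
    {f : A →ₗ[k] B} (mC : C →ₗ[k] C →ₗ[k] C) (hf : IsMulHom k mA mB f) :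
    IsMulHom k (tmulMul k mC mA) (tmulMul k mC mB) (LinearMap.lTensor C f) := by
  ext c a c' a'
  simp [IsMulHom.apply k hf]

lemma isMulHom_rTensor {mA : A →ₗ[k] A →ₗ[k] A} {mB : B →ₗ[k] B →ₗ[k] B}
    {f : A →ₗ[k] B} (mC : C →ₗ[k] C →ₗ[k] C) (hf : IsMulHom k mA mB f) :
    IsMulHom k (tmulMul k mA mC) (tmulMul k mB mC) (LinearMap.rTensor C f) := by
  ext a c a' c'
  simp [IsMulHom.apply k hf]

lemma isMulHom_assoc (mA : A →ₗ[k] A →ₗ[k] A) (mB : B →ₗ[k] B →ₗ[k] B)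
    (mC : C →ₗ[k] C →ₗ[k] C) :
    IsMulHom k (tmulMul k (tmulMul k mA mB) mC) (tmulMul k mA (tmulMul k mB mC))
      (TensorProduct.assoc k A B C).toLinearMap := by
  ext a b c a' b' c'
  simp

end MulHom

section MulHomAlg

variable {A : Type*} {B : Type*} [Ring A] [Algebra k A] [Ring B] [Algebra k B]

lemma isMulHom_algHom (f : A →ₐ[k] B) :
    IsMulHom k (LinearMap.mul k A) (LinearMap.mul k B) f.toLinearMap := by
  refine LinearMap.ext fun u => LinearMap.ext fun v => ?_
  simp

lemma mul_tensor_eq :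
    LinearMap.mul k (A ⊗[k] B)
      = tmulMul k (LinearMap.mul k A) (LinearMap.mul k B) := by
  ext a b a' b'
  simp [Algebra.TensorProduct.tmul_mul_tmul]

lemma mul_tensor_apply (u v : A ⊗[k] B) :
    u * v = tmulMul k (LinearMap.mul k A) (LinearMap.mul k B) u v :=
  (LinearMap.mul_apply' (a := u) (b := v)).symm.trans
    (LinearMap.congr_fun (LinearMap.congr_fun (mul_tensor_eq k) u) v)

end MulHomAlg

/-- collapse second and third tensorands -/
def c23 : R ⊗[k] (Rᵐᵒᵖ ⊗[k] R) →ₗ[k] R ⊗[k] R := LinearMap.lTensor R (opMulL k R)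

@[simp] lemma c23_tmul (a c : R) (b : Rᵐᵒᵖ) :
    c23 k R (a ⊗ₜ (b ⊗ₜ c)) = a ⊗ₜ (b.unop * c) := by
  simp [c23, opMulL, unopL_apply]

/-- collapse first and second tensorands -/
def c12 : R ⊗[k] (Rᵐᵒᵖ ⊗[k] R) →ₗ[k] R ⊗[k] R :=
  LinearMap.rTensor R (mulOpL k R) ∘ₗ (TensorProduct.assoc k R Rᵐᵒᵖ R).symm.toLinearMap

@[simp] lemma c12_tmul (a c : R) (b : Rᵐᵒᵖ) :
    c12 k R (a ⊗ₜ (b ⊗ₜ c)) = (a * b.unop) ⊗ₜ c := by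
  simp [c12, mulOpL, unopL_apply]

/-- `b ⊗ c ↦ (r ↦ b.unop * r * c)` -/
def innerE : Rᵐᵒᵖ ⊗[k] R →ₗ[k] R →ₗ[k] R :=
  TensorProduct.lift (LinearMap.mk₂ k
    (fun b c => LinearMap.mulLeft k b.unop ∘ₗ LinearMap.mulRight k c)
    (fun b b' c => by ext r; simp [add_mul])
    (fun s b c => by ext r; simp [smul_mul_assoc])
    (fun b c c' => by ext r; simp [mul_add])
    (fun s b c => by ext r; simp [mul_smul_comm]))

@[simp] lemma innerE_tmul (b : Rᵐᵒᵖ) (c r : R) :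
    innerE k R (b ⊗ₜ c) r = b.unop * (r * c) := by
  simp [innerE]

/-- right multiplication operator for `c23` -/
def rho : (R ⊗[k] (Rᵐᵒᵖ ⊗[k] R)) →ₗ[k] (R ⊗[k] R) →ₗ[k] (R ⊗[k] R) :=
  TensorProduct.lift (LinearMap.mk₂ k
    (fun a' w => LinearMap.rTensor R (LinearMap.mulRight k a') ∘ₗ
      LinearMap.lTensor R (innerE k R w))
    (fun a a' w => by
      refine TensorProduct.ext' fun m n => ?_
      simp [mul_add, add_tmul])
    (fun s a w => by
      refine TensorProduct.ext' fun m n => ?_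
      simp [mul_smul_comm, smul_tmul'])
    (fun a w w' => by
      simp [map_add, LinearMap.lTensor_add, LinearMap.comp_add])
    (fun s a w => by
      simp [map_smul, LinearMap.lTensor_smul, LinearMap.comp_smul]))

@[simp] lemma rho_tmul (a' a m : R) (b' : Rᵐᵒᵖ) (c' : R) :
    rho k R (a' ⊗ₜ (b' ⊗ₜ c')) (a ⊗ₜ m) = (a * a') ⊗ₜ (b'.unop * (m * c')) := by
  simp [rho]

lemma c23_mul :
    (LinearMap.mul k (R ⊗[k] (Rᵐᵒᵖ ⊗[k] R))).compr₂ (c23 k R)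
      = ((rho k R).compl₂ (c23 k R)).flip := by
  ext a b c a' b' c'
  simp [Algebra.TensorProduct.tmul_mul_tmul, mul_assoc]

lemma c23_mul_apply (u v : R ⊗[k] (Rᵐᵒᵖ ⊗[k] R)) :
    c23 k R (u * v) = rho k R v (c23 k R u) := by
  have := LinearMap.congr_fun (LinearMap.congr_fun (c23_mul k R) u) v
  simpa using this

lemma rho_one (a : R) :
    (rho k R).flip (a ⊗ₜ (1 : R))
      = LinearMap.rTensor R (LinearMap.mulLeft k a) ∘ₗ c23 k R := by
  ext a' b' c'
  simp

lemma rho_one_apply (a : R) (v : R ⊗[k] (Rᵐᵒᵖ ⊗[k] R)) :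
    rho k R v (a ⊗ₜ (1 : R))
      = LinearMap.rTensor R (LinearMap.mulLeft k a) (c23 k R v) := by
  have := LinearMap.congr_fun (rho_one k R a) v
  simpa using this

/-- `b ⊗ c ↦ (n ⊗ m ↦ (n * b.unop) ⊗ (c * m))` -/
def inner2 : Rᵐᵒᵖ ⊗[k] R →ₗ[k] (R ⊗[k] R) →ₗ[k] (R ⊗[k] R) :=
  TensorProduct.lift (LinearMap.mk₂ k
    (fun b c => LinearMap.rTensor R (LinearMap.mulRight k b.unop) ∘ₗ
      LinearMap.lTensor R (LinearMap.mulLeft k c))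
    (fun b b' c => by
      refine TensorProduct.ext' fun m n => ?_
      simp [mul_add, add_tmul])
    (fun s b c => by
      refine TensorProduct.ext' fun m n => ?_
      simp [mul_smul_comm, smul_tmul'])
    (fun b c c' => by
      refine TensorProduct.ext' fun m n => ?_
      simp [add_mul, tmul_add])
    (fun s b c => by
      refine TensorProduct.ext' fun m n => ?_
      simp [smul_mul_assoc, tmul_smul]))

@[simp] lemma inner2_tmul (b : Rᵐᵒᵖ) (c n m : R) :
    inner2 k R (b ⊗ₜ c) (n ⊗ₜ m) = (n * b.unop) ⊗ₜ (c * m) := by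
  simp [inner2]

/-- left multiplication operator for `c12` -/
def rho' : (R ⊗[k] (Rᵐᵒᵖ ⊗[k] R)) →ₗ[k] (R ⊗[k] R) →ₗ[k] (R ⊗[k] R) :=
  TensorProduct.lift (LinearMap.mk₂ k
    (fun a w => inner2 k R w ∘ₗ LinearMap.rTensor R (LinearMap.mulLeft k a))
    (fun a a' w => by
      refine TensorProduct.ext' fun m n => ?_
      simp [add_mul, add_tmul, map_add])
    (fun s a w => by
      refine TensorProduct.ext' fun m n => ?_
      simp [smul_mul_assoc, ← smul_tmul', map_smul])
    (fun a w w' => by simp [map_add, LinearMap.add_comp])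
    (fun s a w => by simp [map_smul, LinearMap.smul_comp]))

@[simp] lemma rho'_tmul (a n m : R) (b : Rᵐᵒᵖ) (c : R) :
    rho' k R (a ⊗ₜ (b ⊗ₜ c)) (n ⊗ₜ m) = (a * n * b.unop) ⊗ₜ (c * m) := by
  simp [rho', mul_assoc]

lemma c12_mul :
    (LinearMap.mul k (R ⊗[k] (Rᵐᵒᵖ ⊗[k] R))).compr₂ (c12 k R)
      = (rho' k R).compl₂ (c12 k R) := by
  ext a b c a' b' c'
  simp [Algebra.TensorProduct.tmul_mul_tmul, mul_assoc]

lemma c12_mul_apply (u v : R ⊗[k] (Rᵐᵒᵖ ⊗[k] R)) :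
    c12 k R (u * v) = rho' k R u (c12 k R v) := by
  have := LinearMap.congr_fun (LinearMap.congr_fun (c12_mul k R) u) v
  simpa using this

lemma rho'_one (b₀ : R) :
    (rho' k R).flip ((1 : R) ⊗ₜ b₀)
      = LinearMap.lTensor R (LinearMap.mulRight k b₀) ∘ₗ c12 k R := by
  ext a' b' c'
  simp

lemma rho'_one_apply (b₀ : R) (v : R ⊗[k] (Rᵐᵒᵖ ⊗[k] R)) :
    rho' k R v ((1 : R) ⊗ₜ b₀)
      = LinearMap.lTensor R (LinearMap.mulRight k b₀) (c12 k R v) := by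
  have := LinearMap.congr_fun (rho'_one k R b₀) v
  simpa using this

end Generic

section WeylStuff

lemma weyl_comm : weylX k * weylY k - weylY k * weylX k = 1 := by
  have h := RingQuot.mkAlgHom_rel k (weylRel.rel (k := k))
  simp only [map_sub, map_mul, map_one] at h
  exact h

lemma weyl_xy : weylX k * weylY k = weylY k * weylX k + 1 := by
  exact (sub_eq_iff_eq_add.mp (weyl_comm k)).trans (add_comm _ _)

/-- nontriviality via the polynomial representation -/
def weylRep : Weyl k →ₐ[k] Module.End k (Polynomial k) :=
  RingQuot.liftAlgHom k ⟨FreeAlgebra.lift k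
    ![(Polynomial.derivative : Polynomial k →ₗ[k] Polynomial k),
      LinearMap.mulLeft k Polynomial.X], by
    rintro _ _ ⟨⟩
    simp only [map_sub, map_mul, map_one, FreeAlgebra.lift_ι_apply,
      Matrix.cons_val_zero, Matrix.cons_val_one, Matrix.head_cons]
    refine LinearMap.ext fun p => ?_
    simp only [LinearMap.sub_apply, Module.End.mul_apply, LinearMap.mulLeft_apply,
      Polynomial.derivative_mul, Polynomial.derivative_X, one_mul, Module.End.one_apply]
    ring⟩

lemma weyl_nontrivial : Nontrivial (Weyl k) :=
  (weylRep k).toRingHom.domain_nontrivial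

/-- induction principle for the Weyl algebra -/
lemma weyl_induction {P : Weyl k → Prop}
    (halg : ∀ a : k, P (algebraMap k (Weyl k) a))
    (hx : P (weylX k)) (hy : P (weylY k))
    (hmul : ∀ a b, P a → P b → P (a * b))
    (hadd : ∀ a b, P a → P b → P (a + b)) :
    ∀ r, P r := by
  intro r
  obtain ⟨z, rfl⟩ := RingQuot.mkAlgHom_surjective k (weylRel k) r
  induction z using FreeAlgebra.induction with
  | grade0 a => rw [AlgHom.commutes]; exact halg a
  | grade1 i =>
    fin_cases i
    · exact hx
    · exact hy
  | mul a b ha hb => rw [map_mul]; exact hmul _ _ ha hb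
  | add a b ha hb => rw [map_add]; exact hadd _ _ ha hb

/-- image of x under the torsor map -/
def Mx : Weyl k ⊗[k] ((Weyl k)ᵐᵒᵖ ⊗[k] Weyl k) :=
  weylX k ⊗ₜ[k] (op (1 : Weyl k) ⊗ₜ[k] (1 : Weyl k))
    - (1 : Weyl k) ⊗ₜ[k] (op (weylX k) ⊗ₜ[k] (1 : Weyl k))
    + (1 : Weyl k) ⊗ₜ[k] (op (1 : Weyl k) ⊗ₜ[k] weylX k)

/-- image of y under the torsor map -/
def My : Weyl k ⊗[k] ((Weyl k)ᵐᵒᵖ ⊗[k] Weyl k) :=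
  weylY k ⊗ₜ[k] (op (1 : Weyl k) ⊗ₜ[k] (1 : Weyl k))
    - (1 : Weyl k) ⊗ₜ[k] (op (weylY k) ⊗ₜ[k] (1 : Weyl k))
    + (1 : Weyl k) ⊗ₜ[k] (op (1 : Weyl k) ⊗ₜ[k] weylY k)

lemma MxMy : Mx k * My k - My k * Mx k = 1 := by
  have dsm : ∀ u v w : Weyl k ⊗[k] ((Weyl k)ᵐᵒᵖ ⊗[k] Weyl k),
      (u - v) * w = u * w - v * w := fun u v w => sub_mul u v w
  have dms : ∀ u v w : Weyl k ⊗[k] ((Weyl k)ᵐᵒᵖ ⊗[k] Weyl k),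
      u * (v - w) = u * v - u * w := fun u v w => mul_sub u v w
  have dam : ∀ u v w : Weyl k ⊗[k] ((Weyl k)ᵐᵒᵖ ⊗[k] Weyl k),
      (u + v) * w = u * w + v * w := fun u v w => @right_distrib _ _ _ (@Distrib.rightDistribClass _ _) u v w
  have dma : ∀ u v w : Weyl k ⊗[k] ((Weyl k)ᵐᵒᵖ ⊗[k] Weyl k),
      u * (v + w) = u * v + u * w := fun u v w => @left_distrib _ _ _ (@Distrib.leftDistribClass _ _) u v w
  simp only [Mx, My, dsm, dms, dam, dma,
    Algebra.TensorProduct.tmul_mul_tmul, mul_one, one_mul, op_one, ← op_mul]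
  simp only [weyl_xy k]
  simp only [op_add, op_one, tmul_add, add_tmul]
  rw [show (1 : Weyl k ⊗[k] ((Weyl k)ᵐᵒᵖ ⊗[k] Weyl k))
      = (1 : Weyl k) ⊗ₜ[k] (op (1 : Weyl k) ⊗ₜ[k] (1 : Weyl k)) from
    (Algebra.TensorProduct.one_def ..).trans (by rw [Algebra.TensorProduct.one_def, op_one])]
  abel

/-- the free lift of the torsor structure map -/
def muF : FreeAlgebra k (Fin 2) →ₐ[k] Weyl k ⊗[k] ((Weyl k)ᵐᵒᵖ ⊗[k] Weyl k) :=
  FreeAlgebra.lift k ![Mx k, My k]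

lemma muRel : ∀ ⦃x y : FreeAlgebra k (Fin 2)⦄, weylRel k x y → muF k x = muF k y := by
  rintro _ _ ⟨⟩
  simp only [muF, map_sub, map_mul, map_one, FreeAlgebra.lift_ι_apply,
    Matrix.cons_val_zero, Matrix.cons_val_one, Matrix.head_cons]
  exact (MxMy k).trans (FreeAlgebra.lift k ![Mx k, My k]).map_one'.symm

/-- the torsor structure map of the Weyl algebra -/
def muA : Weyl k →ₐ[k] Weyl k ⊗[k] ((Weyl k)ᵐᵒᵖ ⊗[k] Weyl k) :=
  RingQuot.liftAlgHom k ⟨muF k, muRel k⟩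

lemma muA_x : muA k (weylX k) = Mx k :=
  (RingQuot.liftAlgHom_mkAlgHom_apply k (muF k) (muRel k)
    (FreeAlgebra.ι k (0 : Fin 2))).trans (by simp [muF])

lemma muA_y : muA k (weylY k) = My k :=
  (RingQuot.liftAlgHom_mkAlgHom_apply k (muF k) (muRel k)
    (FreeAlgebra.ι k (1 : Fin 2))).trans (by simp [muF])

lemma muA_one : muA k 1 = 1 := (muA k).map_one'


lemma mul23W : ∀ r : Weyl k,
    c23 k (Weyl k) ((muA k) r) = r ⊗ₜ[k] (1 : Weyl k) := by
  refine weyl_induction k ?_ ?_ ?_ ?_ ?_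
  · intro a
    simp [Algebra.algebraMap_eq_smul_one, map_smul, map_one, muA_one,
      Algebra.TensorProduct.one_def, smul_tmul']
  · rw [muA_x]
    simp [Mx, map_sub, map_add]
  · rw [muA_y]
    simp [My, map_sub, map_add]
  · intro a b ha hb
    rw [map_mul, c23_mul_apply, ha, rho_one_apply, hb]
    simp only [LinearMap.rTensor_tmul, LinearMap.mulLeft_apply]
  · intro a b ha hb
    rw [map_add, map_add, ha, hb, add_tmul]

lemma mul12W : ∀ r : Weyl k,
    c12 k (Weyl k) ((muA k) r) = (1 : Weyl k) ⊗ₜ[k] r := by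
  refine weyl_induction k ?_ ?_ ?_ ?_ ?_
  · intro a
    simp [Algebra.algebraMap_eq_smul_one, map_smul, map_one, muA_one,
      Algebra.TensorProduct.one_def, smul_tmul']
  · rw [muA_x]
    simp [Mx, map_sub, map_add]
  · rw [muA_y]
    simp [My, map_sub, map_add]
  · intro a b ha hb
    rw [map_mul, c12_mul_apply, hb, rho'_one_apply, ha]
    simp only [LinearMap.lTensor_tmul, LinearMap.mulRight_apply]
  · intro a b ha hb
    rw [map_add, map_add, ha, hb, tmul_add]

lemma sub_eq_smul (u v : Weyl k ⊗[k] ((Weyl k)ᵐᵒᵖ ⊗[k] Weyl k)) :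
    u - v = u + (-1 : k) • v := by
  rw [neg_one_smul k v]
  exact sub_eq_add_neg u v

lemma Mx_eq : Mx k = weylX k ⊗ₜ[k] (op (1 : Weyl k) ⊗ₜ[k] (1 : Weyl k))
    + (-1 : k) • ((1 : Weyl k) ⊗ₜ[k] (op (weylX k) ⊗ₜ[k] (1 : Weyl k)))
    + (1 : Weyl k) ⊗ₜ[k] (op (1 : Weyl k) ⊗ₜ[k] weylX k) := by
  rw [Mx, sub_eq_smul]

lemma My_eq : My k = weylY k ⊗ₜ[k] (op (1 : Weyl k) ⊗ₜ[k] (1 : Weyl k))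
    + (-1 : k) • ((1 : Weyl k) ⊗ₜ[k] (op (weylY k) ⊗ₜ[k] (1 : Weyl k)))
    + (1 : Weyl k) ⊗ₜ[k] (op (1 : Weyl k) ⊗ₜ[k] weylY k) := by
  rw [My, sub_eq_smul]

set_option maxHeartbeats 4000000 in
set_option synthInstance.maxHeartbeats 1000000 in
lemma coassocW :
    LinearMap.lTensor (Weyl k) (LinearMap.lTensor (Weyl k)ᵐᵒᵖ (muA k).toLinearMap)
        ∘ₗ (muA k).toLinearMap
      = LinearMap.lTensor (Weyl k)
          (TensorProduct.assoc k (Weyl k)ᵐᵒᵖ (Weyl k)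
            ((Weyl k)ᵐᵒᵖ ⊗[k] Weyl k)).toLinearMap
        ∘ₗ (TensorProduct.assoc k (Weyl k) ((Weyl k)ᵐᵒᵖ ⊗[k] Weyl k)
            ((Weyl k)ᵐᵒᵖ ⊗[k] Weyl k)).toLinearMap
        ∘ₗ LinearMap.rTensor ((Weyl k)ᵐᵒᵖ ⊗[k] Weyl k) (muA k).toLinearMap
        ∘ₗ (muA k).toLinearMap := by
  refine LinearMap.ext (weyl_induction k ?_ ?_ ?_ ?_ ?_)
  · intro a
    simp [LinearMap.comp_apply, Algebra.algebraMap_eq_smul_one, map_smul, map_one, muA_one,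
      Algebra.TensorProduct.one_def]
  · simp only [LinearMap.comp_apply, AlgHom.toLinearMap_apply, muA_x, Mx_eq,
      map_add, map_smul, map_one, muA_one, LinearMap.lTensor_tmul, LinearMap.rTensor_tmul,
      LinearEquiv.coe_coe, assoc_tmul, AlgHom.toLinearMap_apply,
      Algebra.TensorProduct.one_def, op_one, tmul_add, tmul_smul, add_tmul,
      ← smul_tmul']
    abel
  · simp only [LinearMap.comp_apply, AlgHom.toLinearMap_apply, muA_y, My_eq,
      map_add, map_smul, map_one, muA_one, LinearMap.lTensor_tmul, LinearMap.rTensor_tmul,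
      LinearEquiv.coe_coe, assoc_tmul, AlgHom.toLinearMap_apply,
      Algebra.TensorProduct.one_def, op_one, tmul_add, tmul_smul, add_tmul,
      ← smul_tmul']
    abel
  · intro a b ha hb
    have e1 : LinearMap.mul k ((Weyl k)ᵐᵒᵖ ⊗[k] Weyl k)
        = tmulMul k (LinearMap.mul k (Weyl k)ᵐᵒᵖ) (LinearMap.mul k (Weyl k)) :=
      mul_tensor_eq k
    have e2 : LinearMap.mul k (Weyl k ⊗[k] ((Weyl k)ᵐᵒᵖ ⊗[k] Weyl k))
        = tmulMul k (LinearMap.mul k (Weyl k))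
            (tmulMul k (LinearMap.mul k (Weyl k)ᵐᵒᵖ) (LinearMap.mul k (Weyl k))) := by
      rw [mul_tensor_eq k (A := Weyl k) (B := (Weyl k)ᵐᵒᵖ ⊗[k] Weyl k), e1]
    have hmu : IsMulHom k (LinearMap.mul k (Weyl k))
        (tmulMul k (LinearMap.mul k (Weyl k))
          (tmulMul k (LinearMap.mul k (Weyl k)ᵐᵒᵖ) (LinearMap.mul k (Weyl k))))
        (muA k).toLinearMap := by
      have hmu0 := isMulHom_algHom k (A := Weyl k)
        (B := Weyl k ⊗[k] ((Weyl k)ᵐᵒᵖ ⊗[k] Weyl k)) (muA k)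
      rw [e2] at hmu0
      exact hmu0
    have hin := isMulHom_lTensor k (C := (Weyl k)ᵐᵒᵖ)
      (LinearMap.mul k (Weyl k)ᵐᵒᵖ) hmu
    have h1 := isMulHom_lTensor k (C := Weyl k) (LinearMap.mul k (Weyl k)) hin
    have h2 := isMulHom_rTensor k (C := (Weyl k)ᵐᵒᵖ ⊗[k] Weyl k)
      (tmulMul k (LinearMap.mul k (Weyl k)ᵐᵒᵖ) (LinearMap.mul k (Weyl k))) hmu
    have h3 := isMulHom_assoc k (LinearMap.mul k (Weyl k))
      (tmulMul k (LinearMap.mul k (Weyl k)ᵐᵒᵖ) (LinearMap.mul k (Weyl k)))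
      (tmulMul k (LinearMap.mul k (Weyl k)ᵐᵒᵖ) (LinearMap.mul k (Weyl k)))
    have h4 := isMulHom_lTensor k (C := Weyl k) (LinearMap.mul k (Weyl k))
      (isMulHom_assoc k (LinearMap.mul k (Weyl k)ᵐᵒᵖ) (LinearMap.mul k (Weyl k))
        (tmulMul k (LinearMap.mul k (Weyl k)ᵐᵒᵖ) (LinearMap.mul k (Weyl k))))
    have hconv : ∀ u v : Weyl k ⊗[k] ((Weyl k)ᵐᵒᵖ ⊗[k] Weyl k),
        u * v = tmulMul k (LinearMap.mul k (Weyl k))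
          (tmulMul k (LinearMap.mul k (Weyl k)ᵐᵒᵖ) (LinearMap.mul k (Weyl k))) u v :=
      fun u v => by rw [mul_tensor_apply k u v, e1]
    simp only [LinearMap.comp_apply, AlgHom.toLinearMap_apply] at ha hb ⊢
    rw [map_mul (muA k) a b, hconv,
      IsMulHom.apply k h1, IsMulHom.apply k h2, IsMulHom.apply k h3,
      IsMulHom.apply k h4, ha, hb]
  · intro a b ha hb
    simp only [LinearMap.comp_apply, AlgHom.toLinearMap_apply, map_add] at ha hb ⊢
    rw [ha, hb]

end WeylStuff

end Stmt2Aux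

end Stmt2AuxSection

/-- The first Weyl algebra `A₁(k)` is a (nonzero) Hopf-Galois
algebra, with structure map determined by
`μ(x) = x⊗1⊗1 − 1⊗x⊗1 + 1⊗1⊗x` and `μ(y) = y⊗1⊗1 − 1⊗y⊗1 + 1⊗1⊗y`. -/
theorem stmt2 (k : Type u) [Field k] :
    Nontrivial (Weyl k) ∧
    ∃ H : HopfGaloisStr k (Weyl k),
      H.μ (weylX k) =
        weylX k ⊗ₜ[k] ((op (1 : Weyl k)) ⊗ₜ[k] (1 : Weyl k))
          - (1 : Weyl k) ⊗ₜ[k] ((op (weylX k)) ⊗ₜ[k] (1 : Weyl k))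
          + (1 : Weyl k) ⊗ₜ[k] ((op (1 : Weyl k)) ⊗ₜ[k] weylX k) ∧
      H.μ (weylY k) =
        weylY k ⊗ₜ[k] ((op (1 : Weyl k)) ⊗ₜ[k] (1 : Weyl k))
          - (1 : Weyl k) ⊗ₜ[k] ((op (weylY k)) ⊗ₜ[k] (1 : Weyl k))
          + (1 : Weyl k) ⊗ₜ[k] ((op (1 : Weyl k)) ⊗ₜ[k] weylY k) := by
  exact ⟨Stmt2Aux.weyl_nontrivial k,
    ⟨Stmt2Aux.muA k, Stmt2Aux.coassocW k, Stmt2Aux.mul12W k, Stmt2Aux.mul23W k⟩,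
    Stmt2Aux.muA_x k, Stmt2Aux.muA_y k⟩
end

section
/- Let (R,μ) be a Hopf-Galois algebra over a field k and let H̲(R) be its associated Hopf algebra. Then the map φ : G₀(R) → G(H̲(R)), φ(g) = g^{-1} ⊗ g, is a surjective group homomorphism with kernel k*; that is, there is a short exact sequence of groups 1 → k* → G₀(R) → G(H̲(R)) → 1. -/
open TensorProduct MulOpposite

set_option synthInstance.maxHeartbeats 1000000
set_option maxHeartbeats 1000000

noncomputable section AuxLin

section Dual
variable {k : Type u} [Field k] {V : Type v} [AddCommGroup V] [Module k V]

lemma exists_dual_family {n : ℕ} (x : Fin n → V) (hx : LinearIndependent k x) :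
    ∃ φ : Fin n → (V →ₗ[k] k), ∀ i j, φ i (x j) = if i = j then 1 else 0 := by
  classical
  set S := Submodule.span k (Set.range x)
  let b : Module.Basis (Fin n) k S := Module.Basis.span hx
  obtain ⟨q, hq⟩ := Submodule.exists_isCompl S
  let π := S.linearProjOfIsCompl q hq
  refine ⟨fun i => (b.coord i).comp π, fun i j => ?_⟩
  have hxj : x j ∈ S := Submodule.subset_span (Set.mem_range_self j)
  have hπ : π (x j) = b j := by
    have : π ((⟨x j, hxj⟩ : S) : V) = ⟨x j, hxj⟩ :=
      Submodule.linearProjOfIsCompl_apply_left hq _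
    rw [this]
    apply Subtype.ext
    simp [b, Module.Basis.span_apply hx j]
  simp only [LinearMap.comp_apply, hπ, Module.Basis.coord_apply, Module.Basis.repr_self]
  rw [Finsupp.single_apply]
  simp [eq_comm]

lemma exists_dual_one (v : V) (hv : v ≠ 0) : ∃ f : V →ₗ[k] k, f v = 1 := by
  have h : LinearIndependent k (fun _ : Fin 1 => v) :=
    linearIndependent_unique_iff.mpr hv
  obtain ⟨φ, hφ⟩ := exists_dual_family _ h
  exact ⟨φ 0, by simpa using hφ 0 0⟩

end Dual

section Rep
variable {k : Type u} [Field k] {V : Type v} [AddCommGroup V] [Module k V]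
  {W : Type w} [AddCommGroup W] [Module k W]

/-- `v ⊗ w ↦ f v • w`. -/
def evL (f : V →ₗ[k] k) : V ⊗[k] W →ₗ[k] W :=
  (TensorProduct.lid k W).toLinearMap ∘ₗ LinearMap.rTensor W f

@[simp] lemma evL_tmul (f : V →ₗ[k] k) (v : V) (w : W) :
    evL f (v ⊗ₜ[k] w) = f v • w := rfl

/-- `v ⊗ w ↦ f w • v`. -/
def evR (f : W →ₗ[k] k) : V ⊗[k] W →ₗ[k] V :=
  (TensorProduct.rid k V).toLinearMap ∘ₗ LinearMap.lTensor V f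

@[simp] lemma evR_tmul (f : W →ₗ[k] k) (v : V) (w : W) :
    evR f (v ⊗ₜ[k] w) = f w • v := rfl

lemma exists_fin_rep (u : V ⊗[k] W) :
    ∃ (n : ℕ) (x : Fin n → V) (y : Fin n → W), u = ∑ i, x i ⊗ₜ[k] y i := by
  classical
  obtain ⟨s, hs⟩ := TensorProduct.exists_finset u
  obtain ⟨e⟩ := Fintype.truncEquivFin s
  refine ⟨Fintype.card s, fun i => ((e.symm i : s) : V × W).1, fun i => ((e.symm i : s) : V × W).2, ?_⟩
  rw [hs, ← Finset.sum_coe_sort s (fun p => p.1 ⊗ₜ[k] p.2)]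
  exact (Equiv.sum_comp e.symm (fun p : s => (p : V × W).1 ⊗ₜ[k] (p : V × W).2)).symm

lemma rep_reduce {m : ℕ} (x : Fin (m + 1) → V) (y : Fin (m + 1) → W) (g : Fin (m + 1) → k)
    (j : Fin (m + 1)) (hgj : g j ≠ 0) (hgsum : ∑ i, g i • x i = 0) :
    ∃ (x' : Fin m → V) (y' : Fin m → W), ∑ i, x i ⊗ₜ[k] y i = ∑ i, x' i ⊗ₜ[k] y' i := by
  classical
  refine ⟨fun i => x (j.succAbove i),
    fun i => y (j.succAbove i) + (-(g (j.succAbove i) / g j)) • y j, ?_⟩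
  have hxj : x j = ∑ i : Fin m, (-(g (j.succAbove i) / g j)) • x (j.succAbove i) := by
    have h0 : g j • x j + ∑ i : Fin m, g (j.succAbove i) • x (j.succAbove i) = 0 := by
      rw [← Fin.sum_univ_succAbove (fun i => g i • x i) j]; exact hgsum
    have h1 : g j • x j = -∑ i : Fin m, g (j.succAbove i) • x (j.succAbove i) :=
      eq_neg_of_add_eq_zero_left h0
    calc x j = (g j)⁻¹ • (g j • x j) := by rw [smul_smul, inv_mul_cancel₀ hgj, one_smul]
    _ = (g j)⁻¹ • (-∑ i : Fin m, g (j.succAbove i) • x (j.succAbove i)) := by rw [h1]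
    _ = ∑ i : Fin m, (-(g (j.succAbove i) / g j)) • x (j.succAbove i) := by
        rw [smul_neg, Finset.smul_sum, ← Finset.sum_neg_distrib]
        refine Finset.sum_congr rfl fun i _ => ?_
        rw [smul_smul, neg_smul, div_eq_inv_mul, mul_comm]
  rw [Fin.sum_univ_succAbove (fun i => x i ⊗ₜ[k] y i) j]
  rw [hxj, sum_tmul]
  rw [← Finset.sum_add_distrib]
  refine Finset.sum_congr rfl fun i _ => ?_
  rw [tmul_add, smul_tmul, add_comm]

lemma comm_sum {n : ℕ} (x : Fin n → V) (y : Fin n → W) :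
    TensorProduct.comm k V W (∑ i, x i ⊗ₜ[k] y i) = ∑ i, y i ⊗ₜ[k] x i := by
  rw [map_sum]; simp

lemma exists_indep_rep (u : V ⊗[k] W) :
    ∃ (n : ℕ) (x : Fin n → V) (y : Fin n → W),
      LinearIndependent k x ∧ LinearIndependent k y ∧ u = ∑ i, x i ⊗ₜ[k] y i := by
  classical
  obtain ⟨n, x, y, hu⟩ := exists_fin_rep u
  subst hu
  induction n using Nat.strong_induction_on with
  | _ n ih =>
    by_cases hx : LinearIndependent k x
    · by_cases hy : LinearIndependent k y
      · exact ⟨n, x, y, hx, hy, rfl⟩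
      · obtain ⟨g, hgsum, j, hgj⟩ := Fintype.not_linearIndependent_iff.mp hy
        have hn0 : n ≠ 0 := fun h => (h ▸ j).elim0
        obtain ⟨m, rfl⟩ := Nat.exists_eq_succ_of_ne_zero hn0
        obtain ⟨y', x', h'⟩ := rep_reduce y x g j hgj hgsum
        obtain ⟨n', x'', y'', h1, h2, h3⟩ := ih m (Nat.lt_succ_self m) x' y'
        refine ⟨n', x'', y'', h1, h2, ?_⟩
        have := congrArg (TensorProduct.comm k W V) h'
        rw [comm_sum, comm_sum] at this
        rw [this, h3]
    · obtain ⟨g, hgsum, j, hgj⟩ := Fintype.not_linearIndependent_iff.mp hx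
      have hn0 : n ≠ 0 := fun h => (h ▸ j).elim0
      obtain ⟨m, rfl⟩ := Nat.exists_eq_succ_of_ne_zero hn0
      obtain ⟨x', y', h'⟩ := rep_reduce x y g j hgj hgsum
      obtain ⟨n', x'', y'', h1, h2, h3⟩ := ih m (Nat.lt_succ_self m) x' y'
      exact ⟨n', x'', y'', h1, h2, by rw [h', h3]⟩

lemma cancel_left {n : ℕ} {x : Fin n → V} (hx : LinearIndependent k x)
    {w : Fin n → W} (h : ∑ i, x i ⊗ₜ[k] w i = 0) : ∀ i, w i = 0 := by
  obtain ⟨φ, hφ⟩ := exists_dual_family x hx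
  intro i
  have := congrArg (evL (W := W) (φ i)) h
  rw [map_sum, map_zero] at this
  simpa [hφ, Finset.sum_ite_eq] using this

lemma cancel_left_eq {n : ℕ} {x : Fin n → V} (hx : LinearIndependent k x)
    {w w' : Fin n → W} (h : ∑ i, x i ⊗ₜ[k] w i = ∑ i, x i ⊗ₜ[k] w' i) : ∀ i, w i = w' i := by
  obtain ⟨φ, hφ⟩ := exists_dual_family x hx
  intro i
  have h2 := congrArg (evL (W := W) (φ i)) h
  rw [map_sum, map_sum] at h2
  simp only [evL_tmul, hφ] at h2
  simpa [Finset.sum_ite_eq] using h2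

end Rep

end AuxLin

noncomputable section AuxTor

section Tor
variable {k : Type u} [Field k] {R : Type v} [Ring R] [Algebra k R]

instance : LeftDistribClass (R ⊗[k] (Rᵐᵒᵖ ⊗[k] R)) :=
  ⟨fun a b c => by exact Distrib.left_distrib a b c⟩

instance : RightDistribClass (R ⊗[k] (Rᵐᵒᵖ ⊗[k] R)) :=
  ⟨fun a b c => by exact Distrib.right_distrib a b c⟩

@[simp] lemma opMulL_tmul (a : Rᵐᵒᵖ) (b : R) : opMulL k R (a ⊗ₜ[k] b) = unop a * b := rfl

@[simp] lemma mulOpL_tmul (a : R) (b : Rᵐᵒᵖ) : mulOpL k R (a ⊗ₜ[k] b) = a * unop b := rfl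

lemma smul_one_inj [Nontrivial R] {a b : k} (h : a • (1 : R) = b • (1 : R)) : a = b := by
  have h2 : (a - b) • (1 : R) = 0 := by rw [sub_smul, h, sub_self]
  rcases smul_eq_zero.mp h2 with h3 | h3
  · exact sub_eq_zero.mp h3
  · exact absurd h3 one_ne_zero

lemma evL_one_tmul_mul (f : R →ₗ[k] k) (h : Rᵐᵒᵖ ⊗[k] R) (Z : R ⊗[k] (Rᵐᵒᵖ ⊗[k] R)) :
    evL f (((1 : R) ⊗ₜ[k] h) * Z) = h * evL f Z := by
  induction Z using TensorProduct.induction_on with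
  | zero =>
    have h0 : ((1 : R) ⊗ₜ[k] h) * (0 : R ⊗[k] (Rᵐᵒᵖ ⊗[k] R)) = 0 := by
      exact mul_zero (((1 : R) ⊗ₜ[k] h : R ⊗[k] (Rᵐᵒᵖ ⊗[k] R)))
    rw [h0, map_zero]
    exact (mul_zero h).symm
  | tmul a h' =>
    rw [Algebra.TensorProduct.tmul_mul_tmul, one_mul, evL_tmul, evL_tmul]
    exact (mul_smul_comm (f a) h h').symm
  | add Z₁ Z₂ ih1 ih2 =>
    have hd : ((1 : R) ⊗ₜ[k] h) * (Z₁ + Z₂)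
        = ((1 : R) ⊗ₜ[k] h) * Z₁ + ((1 : R) ⊗ₜ[k] h) * Z₂ := by
      exact mul_add ((1 : R) ⊗ₜ[k] h) Z₁ Z₂
    rw [hd, map_add, map_add, ih1, ih2]
    exact (mul_add h _ _).symm

lemma evL_mul_one_tmul (f : R →ₗ[k] k) (h : Rᵐᵒᵖ ⊗[k] R) (Z : R ⊗[k] (Rᵐᵒᵖ ⊗[k] R)) :
    evL f (Z * ((1 : R) ⊗ₜ[k] h)) = evL f Z * h := by
  induction Z using TensorProduct.induction_on with
  | zero =>
    have h0 : (0 : R ⊗[k] (Rᵐᵒᵖ ⊗[k] R)) * ((1 : R) ⊗ₜ[k] h) = 0 := by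
      exact zero_mul (((1 : R) ⊗ₜ[k] h : R ⊗[k] (Rᵐᵒᵖ ⊗[k] R)))
    rw [h0, map_zero]
    exact (zero_mul h).symm
  | tmul a h' =>
    rw [Algebra.TensorProduct.tmul_mul_tmul, mul_one, evL_tmul, evL_tmul]
    exact (smul_mul_assoc (f a) h' h).symm
  | add Z₁ Z₂ ih1 ih2 =>
    have hd : (Z₁ + Z₂) * ((1 : R) ⊗ₜ[k] h)
        = Z₁ * ((1 : R) ⊗ₜ[k] h) + Z₂ * ((1 : R) ⊗ₜ[k] h) := by
      exact add_mul Z₁ Z₂ ((1 : R) ⊗ₜ[k] h)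
    rw [hd, map_add, map_add, ih1, ih2]
    exact (add_mul _ _ h).symm

lemma scalar_of_mu [Nontrivial R] (H : HopfGaloisStr k R) (r : R)
    (h : H.μ r = r ⊗ₜ[k] (1 : Rᵐᵒᵖ ⊗[k] R)) : ∃ a : k, r = a • (1 : R) := by
  obtain ⟨f₀, hf₀⟩ := exists_dual_one (k := k) (1 : R) one_ne_zero
  have h12 := H.mul12 r
  rw [h] at h12
  have hone : (1 : Rᵐᵒᵖ ⊗[k] R) = (1 : Rᵐᵒᵖ) ⊗ₜ[k] (1 : R) := Algebra.TensorProduct.one_def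
  rw [hone, assoc_symm_tmul] at h12
  rw [LinearMap.rTensor_tmul, mulOpL_tmul] at h12
  simp only [unop_one, mul_one] at h12
  -- h12 : r ⊗ₜ 1 = 1 ⊗ₜ r
  have h2 := congrArg (evR (V := R) (W := R) f₀) h12
  rw [evR_tmul, evR_tmul, hf₀, one_smul] at h2
  exact ⟨f₀ r, h2⟩

lemma surj_aux [Nontrivial R] (H : HopfGaloisStr k R) (u : Rᵐᵒᵖ ⊗[k] R)
    (hΔ : deltaMap H u = u ⊗ₜ[k] u) (hε : opMulL k R u = 1) :
    ∃ g : Rˣ, H.IsGroupLike g ∧ (op ((g⁻¹ : Rˣ) : R)) ⊗ₜ[k] ((g : Rˣ) : R) = u := by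
  classical
  obtain ⟨n, x, y, hx, hy, hu⟩ := exists_indep_rep u
  have hn0 : n ≠ 0 := by
    rintro rfl
    rw [hu] at hε
    simp only [Finset.univ_eq_empty, Finset.sum_empty, map_zero] at hε
    exact zero_ne_one hε
  have j₀ : Fin n := ⟨0, Nat.pos_of_ne_zero hn0⟩
  -- Step 2 : μ (y i) = y i ⊗ u
  have hμy : ∀ i, H.μ (y i) = y i ⊗ₜ[k] u := by
    have h1 : (TensorProduct.assoc k Rᵐᵒᵖ R (Rᵐᵒᵖ ⊗[k] R)).symm
        (LinearMap.lTensor Rᵐᵒᵖ H.μ.toLinearMap u) = u ⊗ₜ[k] u := by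
      simpa [deltaMap] using hΔ
    have h2 : LinearMap.lTensor Rᵐᵒᵖ H.μ.toLinearMap u
        = (TensorProduct.assoc k Rᵐᵒᵖ R (Rᵐᵒᵖ ⊗[k] R)) (u ⊗ₜ[k] u) :=
      (LinearEquiv.symm_apply_eq _).mp h1
    have hL : LinearMap.lTensor Rᵐᵒᵖ H.μ.toLinearMap u = ∑ i, x i ⊗ₜ[k] H.μ (y i) := by
      rw [hu, map_sum]
      exact Finset.sum_congr rfl fun i _ => by rw [LinearMap.lTensor_tmul]; rfl
    have hR : (TensorProduct.assoc k Rᵐᵒᵖ R (Rᵐᵒᵖ ⊗[k] R)) (u ⊗ₜ[k] u)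
        = ∑ i, x i ⊗ₜ[k] (y i ⊗ₜ[k] u) := by
      conv_lhs => rw [show u ⊗ₜ[k] u = (∑ i, x i ⊗ₜ[k] y i) ⊗ₜ[k] u from by rw [← hu]]
      rw [sum_tmul, map_sum]
      exact Finset.sum_congr rfl fun i _ => by rw [assoc_tmul]
    have h4 := hL.symm.trans (h2.trans hR)
    exact cancel_left_eq hx h4
  -- Step 3 : y l * unop (x j) = δ
  obtain ⟨ψ, hψ⟩ := exists_dual_family y hy
  have hyx : ∀ l j, y l * unop (x j) = if j = l then (1 : R) else 0 := by
    intro l j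
    have h12 := H.mul12 (y l)
    rw [hμy l] at h12
    have e1 : (TensorProduct.assoc k R Rᵐᵒᵖ R).symm (y l ⊗ₜ[k] u)
        = ∑ i, (y l ⊗ₜ[k] x i) ⊗ₜ[k] y i := by
      rw [hu, tmul_sum, map_sum]
      exact Finset.sum_congr rfl fun i _ => by rw [assoc_symm_tmul]
    rw [e1, map_sum] at h12
    simp only [LinearMap.rTensor_tmul, mulOpL_tmul] at h12
    have h3 := congrArg (evR (V := R) (W := R) (ψ j)) h12
    rw [map_sum] at h3
    simp only [evR_tmul, hψ] at h3
    simpa [ite_smul, Finset.sum_ite_eq] using h3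
  have hεs : ∑ i, unop (x i) * y i = 1 := by
    rw [hu, map_sum] at hε
    simpa using hε
  -- Step 5 : (1 ⊗ u) * μ (unop (x j)) = unop (x j) ⊗ (1:A)
  have hM : ∀ j, ((1 : R) ⊗ₜ[k] u) * H.μ (unop (x j))
      = unop (x j) ⊗ₜ[k] (1 : Rᵐᵒᵖ ⊗[k] R) := by
    intro j
    have h1u : (1 : R) ⊗ₜ[k] u
        = ∑ l, (unop (x l) ⊗ₜ[k] (1 : Rᵐᵒᵖ ⊗[k] R)) * (y l ⊗ₜ[k] u) := by
      have hterm : ∀ l, (unop (x l) ⊗ₜ[k] (1 : Rᵐᵒᵖ ⊗[k] R)) * (y l ⊗ₜ[k] u)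
          = (unop (x l) * y l) ⊗ₜ[k] u := by
        intro l
        rw [Algebra.TensorProduct.tmul_mul_tmul]
        congr 1
        exact one_mul u
      rw [Finset.sum_congr rfl fun l _ => hterm l, ← sum_tmul, hεs]
    rw [h1u]
    have hsm : (∑ l, (unop (x l) ⊗ₜ[k] (1 : Rᵐᵒᵖ ⊗[k] R)) * (y l ⊗ₜ[k] u)) * H.μ (unop (x j))
        = ∑ l, ((unop (x l) ⊗ₜ[k] (1 : Rᵐᵒᵖ ⊗[k] R)) * (y l ⊗ₜ[k] u)) * H.μ (unop (x j)) := by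
      exact Finset.sum_mul Finset.univ
        (fun l => (unop (x l) ⊗ₜ[k] (1 : Rᵐᵒᵖ ⊗[k] R)) * (y l ⊗ₜ[k] u)) (H.μ (unop (x j)))
    rw [hsm]
    have hterm2 : ∀ l, ((unop (x l) ⊗ₜ[k] (1 : Rᵐᵒᵖ ⊗[k] R)) * (y l ⊗ₜ[k] u)) * H.μ (unop (x j))
        = if j = l then (unop (x l) ⊗ₜ[k] (1 : Rᵐᵒᵖ ⊗[k] R)) else 0 := by
      intro l
      have ha : ((unop (x l) ⊗ₜ[k] (1 : Rᵐᵒᵖ ⊗[k] R)) * (y l ⊗ₜ[k] u)) * H.μ (unop (x j))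
          = (unop (x l) ⊗ₜ[k] (1 : Rᵐᵒᵖ ⊗[k] R)) * ((y l ⊗ₜ[k] u) * H.μ (unop (x j))) := by
        exact mul_assoc (unop (x l) ⊗ₜ[k] (1 : Rᵐᵒᵖ ⊗[k] R)) (y l ⊗ₜ[k] u) (H.μ (unop (x j)))
      rw [ha, ← hμy l]
      have hb : H.μ (y l) * H.μ (unop (x j)) = H.μ (y l * unop (x j)) := by
        exact (map_mul H.μ _ _).symm
      rw [hb, hyx l j]
      have hμite : H.μ (if j = l then (1 : R) else 0)
          = if j = l then (1 : R ⊗[k] (Rᵐᵒᵖ ⊗[k] R)) else 0 := by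
        split
        · exact H.μ.map_one'
        · exact map_zero H.μ
      rw [hμite]
      split
      · exact mul_one (unop (x l) ⊗ₜ[k] (1 : Rᵐᵒᵖ ⊗[k] R))
      · exact mul_zero (unop (x l) ⊗ₜ[k] (1 : Rᵐᵒᵖ ⊗[k] R))
    rw [Finset.sum_congr rfl fun l _ => hterm2 l]
    rw [Finset.sum_ite_eq]
    simp
  -- Step 6 : right inverse
  have hxj0 : ∀ p, y p * unop (x p) = 1 := by
    intro p
    simpa using hyx p p
  have hxne : unop (x j₀) ≠ 0 := by
    intro h0
    have := hxj0 j₀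
    rw [h0, mul_zero] at this
    exact zero_ne_one this
  obtain ⟨f, hf⟩ := exists_dual_one (k := k) _ hxne
  set v : Rᵐᵒᵖ ⊗[k] R := evL f (H.μ (unop (x j₀))) with hv
  have huv : u * v = 1 := by
    have h5 := congrArg (evL (W := Rᵐᵒᵖ ⊗[k] R) f) (hM j₀)
    rw [evL_one_tmul_mul, ← hv, evL_tmul, hf, one_smul] at h5
    exact h5
  -- Step 7 : left inverse
  obtain ⟨f₀, hf₀⟩ := exists_dual_one (k := k) (1 : R) one_ne_zero
  set W : R ⊗[k] (Rᵐᵒᵖ ⊗[k] R) :=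
    ∑ l, H.μ (unop (x l)) * (y l ⊗ₜ[k] (1 : Rᵐᵒᵖ ⊗[k] R)) with hWdef
  have hW : W * ((1 : R) ⊗ₜ[k] u) = 1 := by
    rw [hWdef]
    have hsm : (∑ l, H.μ (unop (x l)) * (y l ⊗ₜ[k] (1 : Rᵐᵒᵖ ⊗[k] R))) * ((1 : R) ⊗ₜ[k] u)
        = ∑ l, (H.μ (unop (x l)) * (y l ⊗ₜ[k] (1 : Rᵐᵒᵖ ⊗[k] R))) * ((1 : R) ⊗ₜ[k] u) := by
      exact Finset.sum_mul Finset.univ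
        (fun l => H.μ (unop (x l)) * (y l ⊗ₜ[k] (1 : Rᵐᵒᵖ ⊗[k] R))) ((1 : R) ⊗ₜ[k] u)
    rw [hsm]
    have hterm : ∀ l, (H.μ (unop (x l)) * (y l ⊗ₜ[k] (1 : Rᵐᵒᵖ ⊗[k] R))) * ((1 : R) ⊗ₜ[k] u)
        = H.μ (unop (x l) * y l) := by
      intro l
      have ha : (H.μ (unop (x l)) * (y l ⊗ₜ[k] (1 : Rᵐᵒᵖ ⊗[k] R))) * ((1 : R) ⊗ₜ[k] u)
          = H.μ (unop (x l)) * ((y l ⊗ₜ[k] (1 : Rᵐᵒᵖ ⊗[k] R)) * ((1 : R) ⊗ₜ[k] u)) := by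
        exact mul_assoc (H.μ (unop (x l))) (y l ⊗ₜ[k] (1 : Rᵐᵒᵖ ⊗[k] R)) ((1 : R) ⊗ₜ[k] u)
      have hb : (y l ⊗ₜ[k] (1 : Rᵐᵒᵖ ⊗[k] R)) * ((1 : R) ⊗ₜ[k] u) = y l ⊗ₜ[k] u := by
        rw [Algebra.TensorProduct.tmul_mul_tmul]
        congr 1
        · exact mul_one (y l)
        · exact one_mul u
      rw [ha, hb, ← hμy l]
      exact (map_mul H.μ _ _).symm
    rw [Finset.sum_congr rfl fun l _ => hterm l]
    have hms : ∑ l, H.μ (unop (x l) * y l) = H.μ (∑ l, unop (x l) * y l) := by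
      exact (map_sum H.μ _ _).symm
    rw [hms, hεs]
    exact H.μ.map_one'
  have hwu : evL f₀ W * u = 1 := by
    have h6 := congrArg (evL (W := Rᵐᵒᵖ ⊗[k] R) f₀) hW
    rw [evL_mul_one_tmul] at h6
    have hone : evL (W := Rᵐᵒᵖ ⊗[k] R) f₀ (1 : R ⊗[k] (Rᵐᵒᵖ ⊗[k] R)) = 1 := by
      rw [Algebra.TensorProduct.one_def, evL_tmul, hf₀, one_smul]
    rw [hone] at h6
    exact h6
  have hvu : v * u = 1 := by
    have hwv : evL f₀ W = v := by
      calc evL f₀ W = evL f₀ W * (u * v) := by rw [huv, mul_one]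
        _ = (evL f₀ W * u) * v := by rw [mul_assoc]
        _ = v := by rw [hwu, one_mul]
    rw [← hwv]
    exact hwu
  -- Step 9 : μ (unop (x j)) = unop (x j) ⊗ v
  have hMj : ∀ j, H.μ (unop (x j)) = unop (x j) ⊗ₜ[k] v := by
    intro j
    have h7 : ((1 : R) ⊗ₜ[k] v) * (((1 : R) ⊗ₜ[k] u) * H.μ (unop (x j)))
        = ((1 : R) ⊗ₜ[k] v) * (unop (x j) ⊗ₜ[k] (1 : Rᵐᵒᵖ ⊗[k] R)) := by
      rw [hM j]
    have h8 : ((1 : R) ⊗ₜ[k] v) * (((1 : R) ⊗ₜ[k] u) * H.μ (unop (x j)))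
        = H.μ (unop (x j)) := by
      have ha : ((1 : R) ⊗ₜ[k] v) * (((1 : R) ⊗ₜ[k] u) * H.μ (unop (x j)))
          = (((1 : R) ⊗ₜ[k] v) * ((1 : R) ⊗ₜ[k] u)) * H.μ (unop (x j)) := by
        exact (mul_assoc ((1 : R) ⊗ₜ[k] v) ((1 : R) ⊗ₜ[k] u) (H.μ (unop (x j)))).symm
      have hb : ((1 : R) ⊗ₜ[k] v) * ((1 : R) ⊗ₜ[k] u)
          = (1 : R ⊗[k] (Rᵐᵒᵖ ⊗[k] R)) := by
        rw [Algebra.TensorProduct.tmul_mul_tmul, hvu]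
        rw [mul_one]
        exact Algebra.TensorProduct.one_def.symm
      rw [ha, hb]
      exact one_mul (H.μ (unop (x j)))
    have h9 : ((1 : R) ⊗ₜ[k] v) * (unop (x j) ⊗ₜ[k] (1 : Rᵐᵒᵖ ⊗[k] R))
        = unop (x j) ⊗ₜ[k] v := by
      rw [Algebra.TensorProduct.tmul_mul_tmul]
      congr 1
      · exact one_mul _
      · exact mul_one v
    rw [← h8, h7, h9]
  -- Step 10-12
  have haij : ∀ i j, ∃ a : k, unop (x i) * y j = a • (1 : R) := by
    intro i j
    apply scalar_of_mu H
    have ha : H.μ (unop (x i) * y j) = H.μ (unop (x i)) * H.μ (y j) := by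
      exact map_mul H.μ _ _
    rw [ha, hMj i, hμy j, Algebra.TensorProduct.tmul_mul_tmul, hvu]
  have hdiag : ∀ p, unop (x p) * y p = 1 := by
    intro p
    obtain ⟨a, ha⟩ := haij p p
    have h1 : y p * unop (x p) = 1 := hxj0 p
    have h2 : y p * (unop (x p) * y p) * unop (x p) = 1 := by
      rw [← mul_assoc, h1, one_mul, h1]
    rw [ha] at h2
    rw [mul_smul_comm, smul_mul_assoc, mul_one, h1] at h2
    have ha1 : a = 1 := smul_one_inj (h2.trans (one_smul k (1 : R)).symm)
    rw [ha, ha1, one_smul]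
  have hsub : Subsingleton (Fin n) := by
    constructor
    intro p q
    by_contra hpq
    have h0 : y p * unop (x q) = 0 := by
      rw [hyx p q, if_neg (fun h : q = p => hpq h.symm)]
    have hcontra : (1 : R) = 0 := by
      calc (1 : R) = (unop (x p) * y p) * (unop (x q) * y q) := by
            rw [hdiag p, hdiag q, one_mul]
        _ = unop (x p) * (y p * unop (x q)) * y q := by
            rw [← mul_assoc, mul_assoc (unop (x p))]
        _ = 0 := by rw [h0, mul_zero, zero_mul]
    exact one_ne_zero hcontra
  have husingle : u = x j₀ ⊗ₜ[k] y j₀ := by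
    rw [hu]
    exact Fintype.sum_eq_single j₀ (fun i hi => absurd (Subsingleton.elim i j₀) hi)
  refine ⟨⟨y j₀, unop (x j₀), hxj0 j₀, hdiag j₀⟩, ?_, ?_⟩
  · show H.μ (y j₀) = _
    rw [hμy j₀, husingle]
    rfl
  · show op (unop (x j₀)) ⊗ₜ[k] y j₀ = u
    rw [op_unop, husingle]

end Tor

end AuxTor

/-- For a Hopf-Galois algebra `(R,μ)`, the map
`φ : G₀(R) → G(H̲(R))`, `φ(g) = g⁻¹ ⊗ g`, is a surjective group homomorphism
with kernel `k*`: there is a short exact sequence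
`1 → k* → G₀(R) → G(H̲(R)) → 1`. -/
theorem stmt4 {k : Type u} [Field k] {R : Type v} [Ring R] [Algebra k R]
    [Nontrivial R] (H : HopfGaloisStr k R) :
    -- the scalars `k*` embed into the group-likes of `R`, injectively
    (∀ a : kˣ, ∃ u : Rˣ, ((u : Rˣ) : R) = (a : k) • (1 : R) ∧ H.IsGroupLike u) ∧
    Function.Injective (fun a : kˣ => (a : k) • (1 : R)) ∧
    -- `φ` is well defined: it sends group-likes of `R` to group-likes of `H̲(R)`
    (∀ g : Rˣ, H.IsGroupLike g →
      IsGroupLikeHR H ((op ((g⁻¹ : Rˣ) : R)) ⊗ₜ[k] ((g : Rˣ) : R))) ∧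
    -- `φ` is a group homomorphism (multiplication taken in `Rᵐᵒᵖ ⊗ R`)
    (∀ g h : Rˣ, H.IsGroupLike g → H.IsGroupLike h →
      (op (((g * h)⁻¹ : Rˣ) : R)) ⊗ₜ[k] (((g * h : Rˣ) : R))
        = ((op ((g⁻¹ : Rˣ) : R)) ⊗ₜ[k] ((g : Rˣ) : R))
          * ((op ((h⁻¹ : Rˣ) : R)) ⊗ₜ[k] ((h : Rˣ) : R))) ∧
    -- `φ` is surjective onto the group-likes of `H̲(R)`
    (∀ u : Rᵐᵒᵖ ⊗[k] R, IsGroupLikeHR H u →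
      ∃ g : Rˣ, H.IsGroupLike g ∧ (op ((g⁻¹ : Rˣ) : R)) ⊗ₜ[k] ((g : Rˣ) : R) = u) ∧
    -- the kernel of `φ` is exactly `k*`
    (∀ g : Rˣ, H.IsGroupLike g →
      ((op ((g⁻¹ : Rˣ) : R)) ⊗ₜ[k] ((g : Rˣ) : R) = (1 : Rᵐᵒᵖ ⊗[k] R)
        ↔ ∃ a : kˣ, ((g : Rˣ) : R) = (a : k) • (1 : R))) := by
  classical
  refine ⟨?_, ?_, ?_, ?_, ?_, ?_⟩
  · -- scalars are group-like
    intro a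
    have hmul1 : ((a : k) • (1 : R)) * (((a⁻¹ : kˣ) : k) • (1 : R)) = 1 := by
      rw [smul_mul_assoc, one_mul, smul_smul, Units.mul_inv, one_smul]
    have hmul2 : (((a⁻¹ : kˣ) : k) • (1 : R)) * ((a : k) • (1 : R)) = 1 := by
      rw [smul_mul_assoc, one_mul, smul_smul, Units.inv_mul, one_smul]
    refine ⟨⟨(a : k) • (1 : R), ((a⁻¹ : kˣ) : k) • (1 : R), hmul1, hmul2⟩, rfl, ?_⟩
    show H.μ ((a : k) • (1 : R))
      = ((a : k) • (1 : R)) ⊗ₜ[k]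
        ((op (((a⁻¹ : kˣ) : k) • (1 : R))) ⊗ₜ[k] ((a : k) • (1 : R)))
    have h1 : H.μ ((a : k) • (1 : R)) = (a : k) • (1 : R ⊗[k] (Rᵐᵒᵖ ⊗[k] R)) := by
      rw [map_smul, show H.μ (1 : R) = 1 from H.μ.map_one']
    have h2 : ((a : k) • (1 : R)) ⊗ₜ[k]
        ((op (((a⁻¹ : kˣ) : k) • (1 : R))) ⊗ₜ[k] ((a : k) • (1 : R)))
        = (a : k) • (1 : R ⊗[k] (Rᵐᵒᵖ ⊗[k] R)) := by
      rw [op_smul, op_one]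
      simp only [tmul_smul, ← smul_tmul', smul_smul]
      rw [show (1 : R) ⊗ₜ[k] ((1 : Rᵐᵒᵖ) ⊗ₜ[k] (1 : R)) = (1 : R ⊗[k] (Rᵐᵒᵖ ⊗[k] R)) from by
        rw [Algebra.TensorProduct.one_def, Algebra.TensorProduct.one_def]]
      congr 1
      simp [Units.inv_mul, Units.mul_inv, mul_assoc]
    rw [h1, h2]
  · -- injectivity of scalars
    intro a b h
    simp only at h
    exact Units.ext (smul_one_inj h)
  · -- φ well defined
    intro g hg
    have hδ : deltaMap H ((op ((g⁻¹ : Rˣ) : R)) ⊗ₜ[k] ((g : Rˣ) : R))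
        = ((op ((g⁻¹ : Rˣ) : R)) ⊗ₜ[k] ((g : Rˣ) : R))
          ⊗ₜ[k] ((op ((g⁻¹ : Rˣ) : R)) ⊗ₜ[k] ((g : Rˣ) : R)) := by
      rw [deltaMap, LinearMap.comp_apply, LinearMap.lTensor_tmul]
      rw [LinearEquiv.coe_coe]
      rw [show H.μ.toLinearMap ((g : Rˣ) : R) = H.μ ((g : Rˣ) : R) from rfl, hg]
      rw [assoc_symm_tmul]
    have hε : opMulL k R ((op ((g⁻¹ : Rˣ) : R)) ⊗ₜ[k] ((g : Rˣ) : R)) = 1 := by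
      rw [opMulL_tmul, unop_op, Units.inv_mul]
    refine ⟨?_, hδ, hε⟩
    show PhiMap H _ = _
    rw [PhiMap, LinearMap.comp_apply, hδ, LinearMap.rTensor_tmul, hε]
    rfl
  · -- group homomorphism
    intro g h _ _
    simp only [mul_inv_rev, Units.val_mul, op_mul, Algebra.TensorProduct.tmul_mul_tmul]
  · -- surjectivity
    intro u hu
    exact surj_aux H u hu.2.1 hu.2.2
  · -- kernel
    intro g hg
    constructor
    · intro h1
      have hginvne : ((g⁻¹ : Rˣ) : R) ≠ 0 := by
        intro h0
        have h5 := Units.inv_mul g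
        rw [h0, zero_mul] at h5
        exact one_ne_zero h5.symm
      obtain ⟨f, hf⟩ := exists_dual_one (k := k) _ hginvne
      have h2 := congrArg (evL (W := R) (f ∘ₗ unopL k R)) h1
      rw [Algebra.TensorProduct.one_def] at h2
      rw [evL_tmul, evL_tmul] at h2
      simp only [LinearMap.comp_apply] at h2
      rw [show unopL k R (op ((g⁻¹ : Rˣ) : R)) = ((g⁻¹ : Rˣ) : R) from rfl] at h2
      rw [show unopL k R (1 : Rᵐᵒᵖ) = (1 : R) from rfl] at h2
      rw [hf, one_smul] at h2
      -- h2 : ↑g = f 1 • 1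
      have hane : f 1 ≠ 0 := by
        intro h0
        rw [h0, zero_smul] at h2
        have := Units.inv_mul g
        rw [h2, mul_zero] at this
        exact one_ne_zero this.symm
      exact ⟨Units.mk0 (f 1) hane, h2⟩
    · rintro ⟨a, ha⟩
      have hginv : ((g⁻¹ : Rˣ) : R) = ((a⁻¹ : kˣ) : k) • (1 : R) := by
        have h3 : (a : k) • (((g⁻¹ : Rˣ) : R)) = 1 := by
          have h3' : ((g⁻¹ : Rˣ) : R) * ((g : Rˣ) : R) = 1 := Units.inv_mul g
          rw [ha, mul_smul_comm, mul_one] at h3'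
          exact h3'
        calc ((g⁻¹ : Rˣ) : R) = ((a⁻¹ : kˣ) : k) • ((a : k) • ((g⁻¹ : Rˣ) : R)) := by
              rw [smul_smul, Units.inv_mul, one_smul]
          _ = ((a⁻¹ : kˣ) : k) • (1 : R) := by rw [h3]
      rw [ha, hginv, op_smul, op_one]
      simp only [tmul_smul, ← smul_tmul', smul_smul]
      rw [show ((a : k) * ((a⁻¹ : kˣ) : k)) = 1 from Units.mul_inv a, one_smul]
      exact Algebra.TensorProduct.one_def.symm
end

section
/- Let (R,μ) be a Hopf-Galois algebra, g, h ∈ G₀(R), and τ, ω ∈ Aut(R) satisfying, for all r ∈ R, τ(r)x^{-1}⊗x-type coassociativity identities of Theorem mainmain: τ(r)_(1)⊗τ(r)_(2)⊗τ(r)_(3) = τ(r_(1))⊗r_(2)⊗r_(3), ω(r)_(1)⊗ω(r)_(2)⊗ω(r)_(3) = ω(r_(1))⊗r_(2)⊗r_(3), g·r_(1)⊗g·r_(2)⊗r_(3) = τ(r_(1))⊗τ(r_(2))⊗r_(3), and h·r_(1)⊗h·r_(2)⊗r_(3) = ω(r_(1))⊗ω(r_(2))⊗r_(3). Then there exist characters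 α, β, γ, δ on the group G₀(R) such that for all x ∈ G₀(R): τ(x) = α(x)x, ω(x) = β(x)x, τ(x) = γ(x) g·x, ω(x) = δ(x) h·x. Consequently α(h)β(g) = γ(h)δ(g), both g and h are quasi-central, gh·(hg)^{-1} ∈ k* (in particular gh = α(h)γ(h)^{-1} hg), and (gh) ⊗ (gh)^{-1} = (hg) ⊗ (hg)^{-1} in R ⊗ R. -/
open TensorProduct MulOpposite

set_option synthInstance.maxHeartbeats 1000000
set_option maxHeartbeats 1000000

noncomputable section

variable {k : Type u} [Field k]

/-- The conditions of Theorem mainmain on a sextuple `(τ, ω, g, h, c, ξ)`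
attached to a Hopf-Galois algebra `(R, μ)`. -/
structure MainMainHyp {R : Type v} [Ring R] [Algebra k R]
    (H : HopfGaloisStr k R) (τ ω : R ≃ₐ[k] R) (g h : Rˣ) (c : R) (ξ : kˣ) :
    Prop where
  /-- `τ` and `ω` commute. -/
  comm : ∀ r : R, τ (ω r) = ω (τ r)
  /-- `τ(r)_(1) ⊗ τ(r)_(2) ⊗ τ(r)_(3) = τ(r_(1)) ⊗ r_(2) ⊗ r_(3)`. -/
  idτ1 : ∀ r : R,
    H.μ (τ r) = LinearMap.rTensor (Rᵐᵒᵖ ⊗[k] R) τ.toLinearMap (H.μ r)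
  /-- `τ(r)_(1) ⊗ τ(r)_(2) ⊗ τ(r)_(3) = τ(r_(1)) ⊗ τ(r_(2)) ⊗ τ(r_(3))`. -/
  idτ2 : ∀ r : R,
    H.μ (τ r) = TensorProduct.map τ.toLinearMap
      (TensorProduct.map (opMapL k τ.toLinearMap) τ.toLinearMap) (H.μ r)
  /-- `ω(r)_(1) ⊗ ω(r)_(2) ⊗ ω(r)_(3) = ω(r_(1)) ⊗ r_(2) ⊗ r_(3)`. -/
  idω1 : ∀ r : R,
    H.μ (ω r) = LinearMap.rTensor (Rᵐᵒᵖ ⊗[k] R) ω.toLinearMap (H.μ r)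
  /-- `ω(r)_(1) ⊗ ω(r)_(2) ⊗ ω(r)_(3) = ω(r_(1)) ⊗ ω(r_(2)) ⊗ ω(r_(3))`. -/
  idω2 : ∀ r : R,
    H.μ (ω r) = TensorProduct.map ω.toLinearMap
      (TensorProduct.map (opMapL k ω.toLinearMap) ω.toLinearMap) (H.μ r)
  /-- `g` is a quasi-central group-like element. -/
  qcg : H.IsQuasiCentral g
  /-- `h` is a quasi-central group-like element. -/
  qch : H.IsQuasiCentral h
  /-- `g·r_(1) ⊗ g·r_(2) ⊗ r_(3) = τ(r_(1)) ⊗ τ(r_(2)) ⊗ r_(3)`. -/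
  idg : ∀ r : R,
    TensorProduct.map (conjL k R g) (LinearMap.rTensor R (conjOpL k R g)) (H.μ r)
      = TensorProduct.map τ.toLinearMap
          (LinearMap.rTensor R (opMapL k τ.toLinearMap)) (H.μ r)
  /-- `h·r_(1) ⊗ h·r_(2) ⊗ r_(3) = ω(r_(1)) ⊗ ω(r_(2)) ⊗ r_(3)`. -/
  idh : ∀ r : R,
    TensorProduct.map (conjL k R h) (LinearMap.rTensor R (conjOpL k R h)) (H.μ r)
      = TensorProduct.map ω.toLinearMap
          (LinearMap.rTensor R (opMapL k ω.toLinearMap)) (H.μ r)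
  /-- `τ(h) = ξ h`. -/
  ξh : τ ((h : Rˣ) : R) = (ξ : k) • ((h : Rˣ) : R)
  /-- `ω(g) = ξ⁻¹ g`. -/
  ξg : ω ((g : Rˣ) : R) = ((ξ⁻¹ : kˣ) : k) • ((g : Rˣ) : R)
  /-- `c` is `σ`-central for `σ = τω`. -/
  sc : ∀ r : R, c * r = τ (ω r) * c
  /-- `c` is `(gh, 1)`-skew primitive. -/
  prim : H.IsSkewPrimitive (g * h) 1 c

/-- The Hopf-Galois structure `HA` on `A` extends `(R, μ)` along `i`. -/
def ExtendsHG {R : Type v} [Ring R] [Algebra k R] {A : Type w} [Ring A]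
    [Algebra k A] (H : HopfGaloisStr k R) (HA : HopfGaloisStr k A)
    (i : R →ₐ[k] A) : Prop :=
  ∀ r : R, HA.μ (i r) = TensorProduct.map i.toLinearMap
    (TensorProduct.map (opMapL k i.toLinearMap) i.toLinearMap) (H.μ r)

/-- The formula `μ(X) = X⊗1⊗1 − g ⊗ g⁻¹X ⊗ 1 + g ⊗ g⁻¹ ⊗ X`. -/
def MuFormula {R : Type v} [Ring R] [Algebra k R] {A : Type w} [Ring A]
    [Algebra k A] (HA : HopfGaloisStr k A) (i : R →ₐ[k] A) (g : Rˣ) (X : A) :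
    Prop :=
  HA.μ X = X ⊗ₜ[k] ((MulOpposite.op (1 : A)) ⊗ₜ[k] (1 : A))
    - i ((g : Rˣ) : R) ⊗ₜ[k]
        ((MulOpposite.op (i (((g⁻¹ : Rˣ)) : R) * X)) ⊗ₜ[k] (1 : A))
    + i ((g : Rˣ) : R) ⊗ₜ[k]
        ((MulOpposite.op (i (((g⁻¹ : Rˣ)) : R))) ⊗ₜ[k] X)

/-- The map `Rᵒᵖ ⊗ R → Aᵒᵖ ⊗ A` induced by `i : R → A`. -/
def incl2 {R : Type v} [Ring R] [Algebra k R] {A : Type w} [Ring A]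
    [Algebra k A] (i : R →ₐ[k] A) : Rᵐᵒᵖ ⊗[k] R →ₗ[k] Aᵐᵒᵖ ⊗[k] A :=
  TensorProduct.map (opMapL k i.toLinearMap) i.toLinearMap

/-- The map `r ⊗ s ↦ (g·r) ⊗ τ(s)` on `Rᵒᵖ ⊗ R` (conjugation on the first leg). -/
def hrAuto {R : Type v} [Ring R] [Algebra k R] (g : Rˣ) (τ : R ≃ₐ[k] R) :
    Rᵐᵒᵖ ⊗[k] R →ₗ[k] Rᵐᵒᵖ ⊗[k] R :=
  TensorProduct.map (conjOpL k R g) τ.toLinearMap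

/-- The element `φ(g) = g⁻¹ ⊗ g` of `Rᵒᵖ ⊗ R`. -/
def phiEl {R : Type v} [Ring R] [Algebra k R] (g : Rˣ) : Rᵐᵒᵖ ⊗[k] R :=
  (MulOpposite.op (((g⁻¹ : Rˣ)) : R)) ⊗ₜ[k] ((g : Rˣ) : R)

end


section Helpers
universe u' v'
variable {k : Type u'} [Field k]

lemma exists_dual_one_s11 {N : Type v'} [AddCommGroup N] [Module k N] {x : N} (hx : x ≠ 0) :
    ∃ f : N →ₗ[k] k, f x = 1 := by
  obtain ⟨g, hg⟩ := (LinearMap.toSpanSingleton k N x).exists_leftInverse_of_injective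
    (LinearMap.ker_eq_bot.mpr (smul_left_injective k hx))
  exact ⟨g, by simpa using congrArg (fun f => f 1) hg⟩

lemma tmul_functional {M N : Type v'} [AddCommGroup M] [Module k M] [AddCommGroup N]
    [Module k N] {u w : M} {v v' : N} (h : u ⊗ₜ[k] v = w ⊗ₜ[k] v') (f : N →ₗ[k] k) :
    f v • u = f v' • w := by
  simpa using congrArg (fun z => (TensorProduct.rid k M) (LinearMap.lTensor M f z)) h

lemma tmul_eq_smul {M N : Type v'} [AddCommGroup M] [Module k M] [AddCommGroup N]
    [Module k N] {u w : M} {v v' : N} (hv : v ≠ 0) (h : u ⊗ₜ[k] v = w ⊗ₜ[k] v') :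
    ∃ a : k, u = a • w := by
  obtain ⟨f, hf⟩ := exists_dual_one_s11 (k := k) hv
  have := tmul_functional h f
  rw [hf, one_smul] at this
  exact ⟨f v', this⟩

variable {R : Type v'} [Ring R] [Algebra k R] [Nontrivial R] (H : HopfGaloisStr k R)

lemma glike_mul {x y : Rˣ} (hx : H.IsGroupLike x) (hy : H.IsGroupLike y) :
    H.IsGroupLike (x * y) := by
  unfold HopfGaloisStr.IsGroupLike at *
  rw [Units.val_mul, map_mul, hx, hy]
  simp only [Algebra.TensorProduct.tmul_mul_tmul, mul_inv_rev, Units.val_mul, ← op_mul]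

lemma scalar_of_aut (τ : R ≃ₐ[k] R)
    (idτ1 : ∀ r : R, H.μ (τ r) = LinearMap.rTensor (Rᵐᵒᵖ ⊗[k] R) τ.toLinearMap (H.μ r))
    {x : Rˣ} (hx : H.IsGroupLike x) :
    ∃ a : kˣ, τ (x : R) = (a : k) • (x : R) := by
  have h1 : H.μ (τ (x:R)) = τ (x:R) ⊗ₜ[k] ((op ((x⁻¹:Rˣ):R)) ⊗ₜ[k] ((x:Rˣ):R)) := by
    rw [idτ1, hx]; simp
  have h2 := H.mul12 (τ (x:R))
  rw [h1] at h2
  simp only [mulOpL, unopL, TensorProduct.assoc_symm_tmul, LinearMap.rTensor_tmul,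
    LinearMap.coe_comp, Function.comp_apply, LinearMap.lTensor_tmul,
    MulOpposite.coe_opLinearEquiv_symm_toLinearMap, LinearEquiv.coe_coe,
    MulOpposite.coe_opLinearEquiv_symm, unop_op, LinearMap.mul'_apply] at h2
  obtain ⟨a, ha⟩ := tmul_eq_smul (k := k) (Units.ne_zero x) h2
  have hval : τ (x:R) = a • (x:R) := by
    have hx' : τ (x:R) = (τ (x:R) * ((x⁻¹:Rˣ):R)) * (x:R) := by
      rw [mul_assoc]; simp
    rw [hx', ha, smul_mul_assoc, one_mul]
  have hτ0 : τ (x:R) ≠ 0 := fun h0 =>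
    Units.ne_zero x (τ.injective (by simpa using h0))
  have ha0 : a ≠ 0 := by rintro rfl; rw [zero_smul] at hval; exact hτ0 hval
  exact ⟨Units.mk0 a ha0, hval⟩

lemma conj_scalar_of_aut (τ : R ≃ₐ[k] R) (g : Rˣ)
    (idg : ∀ r : R,
      TensorProduct.map (conjL k R g) (LinearMap.rTensor R (conjOpL k R g)) (H.μ r)
        = TensorProduct.map τ.toLinearMap
            (LinearMap.rTensor R (opMapL k τ.toLinearMap)) (H.μ r))
    {x : Rˣ} (hx : H.IsGroupLike x) :
    ∃ c : kˣ, τ (x : R) = (c : k) • ((g : R) * (x : R) * ((g⁻¹:Rˣ) : R)) := by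
  have h3 := idg (x:R)
  rw [hx] at h3
  simp only [map_tmul, conjL, conjOpL, opL, unopL, opMapL, LinearMap.rTensor_tmul,
    LinearMap.coe_comp, Function.comp_apply, LinearEquiv.coe_coe, LinearMap.mulLeft_apply,
    LinearMap.mulRight_apply, MulOpposite.coe_opLinearEquiv_symm_toLinearMap,
    MulOpposite.coe_opLinearEquiv_toLinearMap, MulOpposite.coe_opLinearEquiv,
    MulOpposite.coe_opLinearEquiv_symm, unop_op, AlgEquiv.toLinearMap_apply] at h3
  have hne : MulOpposite.op ((g:R) * (((x⁻¹:Rˣ):R) * ((g⁻¹:Rˣ):R))) ≠ (0 : Rᵐᵒᵖ) := by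
    rw [Ne, MulOpposite.op_eq_zero_iff]
    simpa using (g * (x⁻¹ * g⁻¹)).ne_zero
  obtain ⟨f2, hf2⟩ := exists_dual_one_s11 (k := k) hne
  obtain ⟨f3, hf3⟩ := exists_dual_one_s11 (k := k) (Units.ne_zero x)
  have hF := tmul_functional h3 (LinearMap.mul' k k ∘ₗ TensorProduct.map f2 f3)
  simp only [LinearMap.coe_comp, Function.comp_apply, map_tmul, LinearMap.mul'_apply,
    hf2, hf3, one_mul, mul_one, one_smul] at hF
  set c := f2 (MulOpposite.op (τ ((x⁻¹:Rˣ):R))) with hc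
  have hF' : (g:R) * ((x:R) * ((g⁻¹:Rˣ):R)) = c • τ (x:R) := hF
  have hne' : (g:R) * ((x:R) * ((g⁻¹:Rˣ):R)) ≠ 0 := by
    simpa using (g * (x * g⁻¹)).ne_zero
  have hc0 : c ≠ 0 := by
    rintro h0; rw [h0, zero_smul] at hF'; exact hne' hF'
  refine ⟨(Units.mk0 c hc0)⁻¹, ?_⟩
  rw [mul_assoc, Units.val_inv_eq_inv_val, Units.val_mk0, hF', smul_smul,
    inv_mul_cancel₀ hc0, one_smul]

end Helpers

/-- **Claim in the proof of Theorem mainmain.** Given a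
Hopf-Galois algebra `(R,μ)`, group-likes `g, h`, and automorphisms `τ, ω`
satisfying the compatibility identities with `μ`, there are characters
`α, β, γ, δ` on `G₀(R)` with `τ(x) = α(x)x = γ(x) g·x`,
`ω(x) = β(x)x = δ(x) h·x` for all group-like `x`; consequently
`α(h)β(g) = γ(h)δ(g)`, `g` and `h` are quasi-central,
`gh = α(h)γ(h)⁻¹ hg` (so `gh(hg)⁻¹ ∈ k*`) and
`(gh) ⊗ (gh)⁻¹ = (hg) ⊗ (hg)⁻¹` in `R ⊗ R`. -/
theorem stmt11 {k : Type u} [Field k] {R : Type v} [Ring R] [Algebra k R]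
    [Nontrivial R] (H : HopfGaloisStr k R)
    (g h : Rˣ) (hg : H.IsGroupLike g) (hh : H.IsGroupLike h)
    (τ ω : R ≃ₐ[k] R)
    (idτ1 : ∀ r : R,
      H.μ (τ r) = LinearMap.rTensor (Rᵐᵒᵖ ⊗[k] R) τ.toLinearMap (H.μ r))
    (idω1 : ∀ r : R,
      H.μ (ω r) = LinearMap.rTensor (Rᵐᵒᵖ ⊗[k] R) ω.toLinearMap (H.μ r))
    (idg : ∀ r : R,
      TensorProduct.map (conjL k R g) (LinearMap.rTensor R (conjOpL k R g)) (H.μ r)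
        = TensorProduct.map τ.toLinearMap
            (LinearMap.rTensor R (opMapL k τ.toLinearMap)) (H.μ r))
    (idh : ∀ r : R,
      TensorProduct.map (conjL k R h) (LinearMap.rTensor R (conjOpL k R h)) (H.μ r)
        = TensorProduct.map ω.toLinearMap
            (LinearMap.rTensor R (opMapL k ω.toLinearMap)) (H.μ r)) :
    ∃ α β γ δ : Rˣ → kˣ,
      -- `α, β, γ, δ` are characters of the group of group-likes
      (∀ x y : Rˣ, H.IsGroupLike x → H.IsGroupLike y →
        α (x * y) = α x * α y ∧ β (x * y) = β x * β y ∧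
        γ (x * y) = γ x * γ y ∧ δ (x * y) = δ x * δ y) ∧
      -- `τ(x) = α(x) x`, `ω(x) = β(x) x`, `τ(x) = γ(x) g·x`, `ω(x) = δ(x) h·x`
      (∀ x : Rˣ, H.IsGroupLike x →
        τ ((x : Rˣ) : R) = (α x : k) • ((x : Rˣ) : R) ∧
        ω ((x : Rˣ) : R) = (β x : k) • ((x : Rˣ) : R) ∧
        τ ((x : Rˣ) : R) = (γ x : k) •
          (((g : Rˣ) : R) * ((x : Rˣ) : R) * (((g⁻¹ : Rˣ)) : R)) ∧
        ω ((x : Rˣ) : R) = (δ x : k) •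
          (((h : Rˣ) : R) * ((x : Rˣ) : R) * (((h⁻¹ : Rˣ)) : R))) ∧
      -- `α(h)β(g) = γ(h)δ(g)`
      α h * β g = γ h * δ g ∧
      -- `g` and `h` are quasi-central
      H.IsQuasiCentral g ∧ H.IsQuasiCentral h ∧
      -- `gh = α(h)γ(h)⁻¹ hg`, so `gh(hg)⁻¹` is a scalar
      ((g : Rˣ) : R) * ((h : Rˣ) : R)
        = ((α h : k) * ((γ h : kˣ)⁻¹ : k)) • (((h : Rˣ) : R) * ((g : Rˣ) : R)) ∧
      -- `(gh) ⊗ (gh)⁻¹ = (hg) ⊗ (hg)⁻¹` in `R ⊗ R`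
      (((g * h : Rˣ) : R) ⊗ₜ[k] (((g * h)⁻¹ : Rˣ) : R) : R ⊗[k] R)
        = ((h * g : Rˣ) : R) ⊗ₜ[k] (((h * g)⁻¹ : Rˣ) : R) := by
  classical
  let α : Rˣ → kˣ := fun x =>
    if hx : H.IsGroupLike x then (scalar_of_aut H τ idτ1 hx).choose else 1
  let β : Rˣ → kˣ := fun x =>
    if hx : H.IsGroupLike x then (scalar_of_aut H ω idω1 hx).choose else 1
  let γ : Rˣ → kˣ := fun x =>
    if hx : H.IsGroupLike x then (conj_scalar_of_aut H τ g idg hx).choose else 1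
  let δ : Rˣ → kˣ := fun x =>
    if hx : H.IsGroupLike x then (conj_scalar_of_aut H ω h idh hx).choose else 1
  have hα : ∀ x : Rˣ, H.IsGroupLike x → τ (x:R) = ((α x : kˣ) : k) • (x:R) := by
    intro x hx
    simp only [α, dif_pos hx]
    exact (scalar_of_aut H τ idτ1 hx).choose_spec
  have hβ : ∀ x : Rˣ, H.IsGroupLike x → ω (x:R) = ((β x : kˣ) : k) • (x:R) := by
    intro x hx
    simp only [β, dif_pos hx]
    exact (scalar_of_aut H ω idω1 hx).choose_spec
  have hγ : ∀ x : Rˣ, H.IsGroupLike x →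
      τ (x:R) = ((γ x : kˣ) : k) • ((g:R) * (x:R) * ((g⁻¹:Rˣ):R)) := by
    intro x hx
    simp only [γ, dif_pos hx]
    exact (conj_scalar_of_aut H τ g idg hx).choose_spec
  have hδ : ∀ x : Rˣ, H.IsGroupLike x →
      ω (x:R) = ((δ x : kˣ) : k) • ((h:R) * (x:R) * ((h⁻¹:Rˣ):R)) := by
    intro x hx
    simp only [δ, dif_pos hx]
    exact (conj_scalar_of_aut H ω h idh hx).choose_spec
  have cancel : ∀ {a b : k} {r : R}, r ≠ 0 → a • r = b • r → a = b :=
    fun hr hab => smul_left_injective k hr hab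
  have trans_smul : ∀ (a b : kˣ) (u w : R), (a:k) • u = (b:k) • w →
      u = (((a⁻¹ * b : kˣ)) : k) • w := by
    intro a b u w hab
    rw [Units.val_mul, ← smul_smul, ← hab, smul_smul, Units.val_inv_eq_inv_val,
      inv_mul_cancel₀ a.ne_zero, one_smul]
  -- multiplicativity of α and β
  have hmulα : ∀ x y : Rˣ, H.IsGroupLike x → H.IsGroupLike y → α (x*y) = α x * α y := by
    intro x y hx hy
    have hxy := glike_mul H hx hy
    apply Units.ext
    rw [Units.val_mul]
    refine cancel (Units.ne_zero (x*y)) ?_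
    rw [← hα _ hxy, Units.val_mul, map_mul, hα x hx, hα y hy, smul_mul_assoc,
      mul_smul_comm, smul_smul]
  have hmulβ : ∀ x y : Rˣ, H.IsGroupLike x → H.IsGroupLike y → β (x*y) = β x * β y := by
    intro x y hx hy
    have hxy := glike_mul H hx hy
    apply Units.ext
    rw [Units.val_mul]
    refine cancel (Units.ne_zero (x*y)) ?_
    rw [← hβ _ hxy, Units.val_mul, map_mul, hβ x hx, hβ y hy, smul_mul_assoc,
      mul_smul_comm, smul_smul]
  -- multiplicativity of γ and δ
  have hconj : ∀ x y : Rˣ,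
      ((g:R)*(x:R)*((g⁻¹:Rˣ):R)) * ((g:R)*(y:R)*((g⁻¹:Rˣ):R))
        = (g:R)*((x:R)*(y:R))*((g⁻¹:Rˣ):R) := by
    intro x y
    have hu : (g*x*g⁻¹) * (g*y*g⁻¹) = g*(x*y)*g⁻¹ := by group
    simpa only [Units.val_mul] using congrArg Units.val hu
  have hconj' : ∀ x y : Rˣ,
      ((h:R)*(x:R)*((h⁻¹:Rˣ):R)) * ((h:R)*(y:R)*((h⁻¹:Rˣ):R))
        = (h:R)*((x:R)*(y:R))*((h⁻¹:Rˣ):R) := by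
    intro x y
    have hu : (h*x*h⁻¹) * (h*y*h⁻¹) = h*(x*y)*h⁻¹ := by group
    simpa only [Units.val_mul] using congrArg Units.val hu
  have hmulγ : ∀ x y : Rˣ, H.IsGroupLike x → H.IsGroupLike y → γ (x*y) = γ x * γ y := by
    intro x y hx hy
    have hxy := glike_mul H hx hy
    apply Units.ext
    rw [Units.val_mul]
    have hne : (g:R)*((x:R)*(y:R))*((g⁻¹:Rˣ):R) ≠ 0 := by
      simpa [Units.val_mul] using (g*(x*y)*g⁻¹).ne_zero
    refine cancel hne ?_
    have e1 := hγ _ hxy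
    rw [Units.val_mul] at e1
    rw [← e1, map_mul, hγ x hx, hγ y hy, smul_mul_assoc, mul_smul_comm, smul_smul, hconj]
  have hmulδ : ∀ x y : Rˣ, H.IsGroupLike x → H.IsGroupLike y → δ (x*y) = δ x * δ y := by
    intro x y hx hy
    have hxy := glike_mul H hx hy
    apply Units.ext
    rw [Units.val_mul]
    have hne : (h:R)*((x:R)*(y:R))*((h⁻¹:Rˣ):R) ≠ 0 := by
      simpa [Units.val_mul] using (h*(x*y)*h⁻¹).ne_zero
    refine cancel hne ?_
    have e1 := hδ _ hxy
    rw [Units.val_mul] at e1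
    rw [← e1, map_mul, hδ x hx, hδ y hy, smul_mul_assoc, mul_smul_comm, smul_smul, hconj']
  -- key commutation relations
  have sα : ∀ x : Rˣ, H.IsGroupLike x →
      ((α x : kˣ):k) • ((x:R) * (g:R)) = ((γ x : kˣ):k) • ((g:R)*(x:R)) := by
    intro x hx
    have e0 : ((α x :kˣ):k) • (x:R) = ((γ x:kˣ):k) • ((g:R)*(x:R)*((g⁻¹:Rˣ):R)) :=
      (hα x hx).symm.trans (hγ x hx)
    have e1 := congrArg (· * (g:R)) e0
    simpa [smul_mul_assoc, mul_assoc, Units.inv_mul] using e1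
  have sβ : ∀ x : Rˣ, H.IsGroupLike x →
      ((β x : kˣ):k) • ((x:R) * (h:R)) = ((δ x : kˣ):k) • ((h:R)*(x:R)) := by
    intro x hx
    have e0 : ((β x :kˣ):k) • (x:R) = ((δ x:kˣ):k) • ((h:R)*(x:R)*((h⁻¹:Rˣ):R)) :=
      (hβ x hx).symm.trans (hδ x hx)
    have e1 := congrArg (· * (h:R)) e0
    simpa [smul_mul_assoc, mul_assoc, Units.inv_mul] using e1
  have qcg : H.IsQuasiCentral g := by
    refine ⟨hg, fun x => (α x)⁻¹ * γ x, ?_, ?_⟩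
    · intro x y hx hy
      dsimp only
      rw [hmulα x y hx hy, hmulγ x y hx hy, mul_inv, mul_mul_mul_comm]
    · intro x hx
      exact trans_smul (α x) (γ x) _ _ (sα x hx)
  have qch : H.IsQuasiCentral h := by
    refine ⟨hh, fun x => (β x)⁻¹ * δ x, ?_, ?_⟩
    · intro x y hx hy
      dsimp only
      rw [hmulβ x y hx hy, hmulδ x y hx hy, mul_inv, mul_mul_mul_comm]
    · intro x hx
      exact trans_smul (β x) (δ x) _ _ (sβ x hx)
  -- gh vs hg
  have e1 : (g:R)*(h:R) = (((γ h)⁻¹ * α h : kˣ):k) • ((h:R)*(g:R)) :=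
    trans_smul (γ h) (α h) _ _ (sα h hh).symm
  have e2 : (h:R)*(g:R) = (((δ g)⁻¹ * β g : kˣ):k) • ((g:R)*(h:R)) :=
    trans_smul (δ g) (β g) _ _ (sβ g hg).symm
  have hc12 : ((γ h)⁻¹ * α h) * ((δ g)⁻¹ * β g) = (1:kˣ) := by
    apply Units.ext
    refine cancel (show (g:R)*(h:R) ≠ 0 by simpa [Units.val_mul] using (g*h).ne_zero) ?_
    rw [Units.val_one, one_smul]
    conv_rhs => rw [e1, e2]
    simp only [smul_smul, Units.val_mul]
  have habgd : α h * β g = γ h * δ g := by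
    have h1 : (γ h * δ g)⁻¹ * (α h * β g) = 1 := by
      rw [mul_inv, mul_mul_mul_comm]; exact hc12
    exact (inv_mul_eq_one.mp h1).symm
  have hghhg : (g:R)*(h:R) = ((α h : k) * ((γ h : kˣ)⁻¹ : k)) • ((h:R)*(g:R)) := by
    rw [e1, Units.val_mul, mul_comm, Units.val_inv_eq_inv_val]
  -- final tensor identity
  set L : kˣ := (γ h)⁻¹ * α h with hLdef
  have hvalgh : ((g*h : Rˣ):R) = (L:k) • ((h*g : Rˣ):R) := by
    rw [Units.val_mul, Units.val_mul]; exact e1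
  have hinv : (((g*h)⁻¹ : Rˣ):R) = ((L⁻¹:kˣ):k) • (((h*g)⁻¹ : Rˣ):R) := by
    have h1 : ((((L⁻¹:kˣ):k) • (((h*g)⁻¹:Rˣ):R)) * ((g*h : Rˣ):R)) = 1 := by
      rw [smul_mul_assoc, hvalgh, mul_smul_comm, smul_smul, ← Units.val_mul,
        inv_mul_cancel, Units.val_one, one_smul, Units.inv_mul]
    calc (((g*h)⁻¹ : Rˣ):R)
        = ((((L⁻¹:kˣ):k) • (((h*g)⁻¹:Rˣ):R)) * ((g*h : Rˣ):R)) * (((g*h)⁻¹ : Rˣ):R) := by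
          rw [h1, one_mul]
      _ = ((L⁻¹:kˣ):k) • (((h*g)⁻¹ : Rˣ):R) := by
          rw [mul_assoc, Units.mul_inv, mul_one]
  refine ⟨α, β, γ, δ, ?_, ?_, habgd, qcg, qch, hghhg, ?_⟩
  · intro x y hx hy
    exact ⟨hmulα x y hx hy, hmulβ x y hx hy, hmulγ x y hx hy, hmulδ x y hx hy⟩
  · intro x hx
    exact ⟨hα x hx, hβ x hx, hγ x hx, hδ x hx⟩
  · rw [hvalgh, hinv, tmul_smul, ← TensorProduct.smul_tmul', smul_smul, ← Units.val_mul,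
      inv_mul_cancel, Units.val_one, one_smul]
end
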